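/- arXiv:2207.09032 — 10 statements merged into one kernel-verified Lean document; each statement's English description precedes it below -/
import Mathlib

section
/- Let a, b be positive integers with gcd(a,b) = 1 and b ≥ 2. Define S_k = {k^a · n^(a/b) : n ∈ ℕ, n is b-free} for each positive integer k. Then the sets S_k, k ∈ ℕ, are pairwise disjoint subsets of ℝ. -/
def IsBFree (b n : ℕ) : Prop := ∀ k : ℕ, 1 < k → ¬ k ^ b ∣ n

lemma factorization_lt_of_bfree {b n : ℕ} (hn : 0 < n) (h : IsBFree b n)
    {p : ℕ} (hp : p.Prime) : n.factorization p < b := by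
  by_contra hle
  push_neg at hle
  exact h p hp.one_lt ((Nat.Prime.pow_dvd_iff_le_factorization hp hn.ne').mpr hle)

lemma key_nat (b : ℕ) (hb : 0 < b) {k₁ k₂ n₁ n₂ : ℕ}
    (hk₁ : 0 < k₁) (hk₂ : 0 < k₂) (hn₁ : 0 < n₁) (hn₂ : 0 < n₂)
    (h₁ : IsBFree b n₁) (h₂ : IsBFree b n₂)
    (h : k₁ ^ b * n₁ = k₂ ^ b * n₂) : k₁ = k₂ := by
  have hfact : k₁.factorization = k₂.factorization := by
    ext p
    by_cases hp : p.Prime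
    · have hcongr := congrArg (fun m => m.factorization p) h
      simp only [Nat.factorization_mul (pow_ne_zero b hk₁.ne') hn₁.ne',
        Nat.factorization_mul (pow_ne_zero b hk₂.ne') hn₂.ne',
        Nat.factorization_pow, Finsupp.coe_add, Finsupp.coe_smul, Pi.add_apply,
        Pi.smul_apply, smul_eq_mul] at hcongr
      have hw₁ : n₁.factorization p < b := factorization_lt_of_bfree hn₁ h₁ hp
      have hw₂ : n₂.factorization p < b := factorization_lt_of_bfree hn₂ h₂ hp
      set v₁ := k₁.factorization p
      set v₂ := k₂.factorization p
      set w₁ := n₁.factorization p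
      set w₂ := n₂.factorization p
      have hmod : w₁ = w₂ := by
        have e1 : (b * v₁ + w₁) % b = w₁ := by
          rw [Nat.mul_add_mod, Nat.mod_eq_of_lt hw₁]
        have e2 : (b * v₂ + w₂) % b = w₂ := by
          rw [Nat.mul_add_mod, Nat.mod_eq_of_lt hw₂]
        rw [← e1, ← e2, hcongr]
      have hb' : b * v₁ = b * v₂ := by omega
      exact Nat.eq_of_mul_eq_mul_left hb hb'
    · rw [Nat.factorization_eq_zero_of_not_prime _ hp,
        Nat.factorization_eq_zero_of_not_prime _ hp]
  exact Nat.factorization_inj (Set.mem_setOf.mpr hk₁.ne') (Set.mem_setOf.mpr hk₂.ne') hfact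

lemma rpow_pow_eq (a b : ℕ) (hb : 0 < b) (k n : ℕ) :
    ((k : ℝ) ^ a * (n : ℝ) ^ ((a : ℝ) / b)) ^ b = ((k ^ (a * b) * n ^ a : ℕ) : ℝ) := by
  have hb' : (b : ℝ) ≠ 0 := Nat.cast_ne_zero.mpr hb.ne'
  have : ((n : ℝ) ^ ((a : ℝ) / b)) ^ b = (n : ℝ) ^ a := by
    rw [← Real.rpow_natCast ((n : ℝ) ^ ((a : ℝ) / b)) b,
      ← Real.rpow_mul (Nat.cast_nonneg n), div_mul_cancel₀ _ hb', Real.rpow_natCast]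
  rw [mul_pow, this, ← pow_mul]
  push_cast
  ring

theorem stmt1 (a b : ℕ) (ha : 0 < a) (hb : 2 ≤ b) (hab : Nat.gcd a b = 1)
    (k₁ k₂ : ℕ) (hk₁ : 0 < k₁) (hk₂ : 0 < k₂) (hne : k₁ ≠ k₂) :
    Disjoint
      {x : ℝ | ∃ n : ℕ, 0 < n ∧ IsBFree b n ∧ x = (k₁ : ℝ) ^ a * (n : ℝ) ^ ((a : ℝ) / b)}
      {x : ℝ | ∃ n : ℕ, 0 < n ∧ IsBFree b n ∧ x = (k₂ : ℝ) ^ a * (n : ℝ) ^ ((a : ℝ) / b)} := by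
  have hb0 : 0 < b := lt_of_lt_of_le two_pos hb
  rw [Set.disjoint_left]
  rintro x ⟨n₁, hn₁, hf₁, hx₁⟩ ⟨n₂, hn₂, hf₂, hx₂⟩
  have heq : (k₁ : ℝ) ^ a * (n₁ : ℝ) ^ ((a : ℝ) / b)
      = (k₂ : ℝ) ^ a * (n₂ : ℝ) ^ ((a : ℝ) / b) := by rw [← hx₁, ← hx₂]
  have hpow := congrArg (fun y : ℝ => y ^ b) heq
  simp only [rpow_pow_eq a b hb0] at hpow
  have hnat : k₁ ^ (a * b) * n₁ ^ a = k₂ ^ (a * b) * n₂ ^ a := by exact_mod_cast hpow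
  have hnat' : (k₁ ^ b * n₁) ^ a = (k₂ ^ b * n₂) ^ a := by
    rw [mul_pow, mul_pow, ← pow_mul, ← pow_mul, mul_comm b a]
    exact hnat
  have hkey : k₁ ^ b * n₁ = k₂ ^ b * n₂ :=
    Nat.pow_left_injective ha.ne' hnat'
  exact hne (key_nat b hb0 hk₁ hk₂ hn₁ hn₂ hf₁ hf₂ hkey)
end

section
/- Fix integers a ≥ 1 and b ≥ 2, and let S = (n^(a/b))_{n∈ℕ}. For K ∈ ℕ let A_K be the set of elements of S of the form (k^b n)^(a/b) with k > K. Then the relative upper density of A_K in S is at most ∑_{k>K} 1/k^b, and in particular it tends to 0 as K → ∞. -/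
open scoped Classical

private lemma card_le_sum_div (b K N : ℕ) (hb : 1 ≤ b) :
    ((Finset.Icc 1 N).filter fun n => ∃ k > K, ∃ m, 0 < m ∧ n = k ^ b * m).card
      ≤ ∑ k ∈ Finset.Icc (K + 1) N, N / k ^ b := by
  calc ((Finset.Icc 1 N).filter fun n => ∃ k > K, ∃ m, 0 < m ∧ n = k ^ b * m).card
      ≤ ((Finset.Icc (K + 1) N).biUnion
          (fun k => (Finset.Icc 1 N).filter fun n => k ^ b ∣ n)).card := by
        apply Finset.card_le_card
        intro n hn
        simp only [Finset.mem_filter] at hn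
        obtain ⟨hn1, k, hk, m, hm, rfl⟩ := hn
        simp only [Finset.mem_biUnion, Finset.mem_Icc, Finset.mem_filter]
        obtain ⟨hl, hr⟩ := Finset.mem_Icc.mp hn1
        refine ⟨k, ⟨hk, ?_⟩, ⟨hl, hr⟩, ⟨m, rfl⟩⟩
        have h1 : k ≤ k ^ b := Nat.le_self_pow (by omega) k
        have h2 : k ^ b ≤ k ^ b * m := Nat.le_mul_of_pos_right _ hm
        omega
    _ ≤ ∑ k ∈ Finset.Icc (K + 1) N,
          ((Finset.Icc 1 N).filter fun n => k ^ b ∣ n).card := Finset.card_biUnion_le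
    _ = ∑ k ∈ Finset.Icc (K + 1) N, N / k ^ b := by
        refine Finset.sum_congr rfl fun k _ => ?_
        rw [show Finset.Icc 1 N = Finset.Ioc 0 N from rfl,
          Nat.Ioc_filter_dvd_card_eq_div]

theorem stmt4 (a b : ℕ) (ha : 1 ≤ a) (hb : 2 ≤ b) :
    (∀ K : ℕ,
      Filter.limsup (fun N : ℕ =>
          (((Finset.Icc 1 N).filter fun n => ∃ k > K, ∃ m, 0 < m ∧ n = k ^ b * m).card : ℝ) / N)
        Filter.atTop ≤ ∑' k : {k : ℕ // K < k}, (1 : ℝ) / ((k : ℕ) : ℝ) ^ b) ∧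
    Filter.Tendsto (fun K : ℕ =>
      Filter.limsup (fun N : ℕ =>
          (((Finset.Icc 1 N).filter fun n => ∃ k > K, ∃ m, 0 < m ∧ n = k ^ b * m).card : ℝ) / N)
        Filter.atTop) Filter.atTop (nhds 0) := by
  set f : ℕ → ℝ := fun k => (1 : ℝ) / (k : ℝ) ^ b with hf
  have hsum : Summable f := Real.summable_one_div_nat_pow.mpr (by omega)
  have hfnn : ∀ k, 0 ≤ f k := fun k => by positivity
  set C : ℕ → ℝ := fun K => ∑' k : {k : ℕ // K < k}, f k with hC
  have hCeq : ∀ K, C K = ∑' k : ℕ, (Set.Ioi K).indicator f k := fun K =>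
    tsum_subtype (Set.Ioi K) f
  have hCnn : ∀ K, 0 ≤ C K := fun K => tsum_nonneg fun k => hfnn _
  -- the pointwise bound: u K N ≤ C K
  set u : ℕ → ℕ → ℝ := fun K N =>
    (((Finset.Icc 1 N).filter fun n => ∃ k > K, ∃ m, 0 < m ∧ n = k ^ b * m).card : ℝ) / N
    with hu
  have hunn : ∀ K N, 0 ≤ u K N := fun K N => by positivity
  have hkey : ∀ K N, u K N ≤ C K := by
    intro K N
    rcases Nat.eq_zero_or_pos N with rfl | hN
    · simp only [hu, Nat.cast_zero, div_zero]
      exact hCnn K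
    have hcard : (((Finset.Icc 1 N).filter
        fun n => ∃ k > K, ∃ m, 0 < m ∧ n = k ^ b * m).card : ℝ) ≤ N * C K := by
      calc (((Finset.Icc 1 N).filter
            fun n => ∃ k > K, ∃ m, 0 < m ∧ n = k ^ b * m).card : ℝ)
          ≤ ((∑ k ∈ Finset.Icc (K + 1) N, N / k ^ b : ℕ) : ℝ) := by
            exact_mod_cast card_le_sum_div b K N (by omega)
        _ = ∑ k ∈ Finset.Icc (K + 1) N, ((N / k ^ b : ℕ) : ℝ) := by
            push_cast; ring
        _ ≤ ∑ k ∈ Finset.Icc (K + 1) N, (N : ℝ) / (k : ℝ) ^ b := by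
            refine Finset.sum_le_sum fun k _ => ?_
            calc ((N / k ^ b : ℕ) : ℝ) ≤ (N : ℝ) / ((k ^ b : ℕ) : ℝ) := Nat.cast_div_le
              _ = (N : ℝ) / (k : ℝ) ^ b := by push_cast; ring
        _ = (N : ℝ) * ∑ k ∈ Finset.Icc (K + 1) N, f k := by
            rw [Finset.mul_sum]
            refine Finset.sum_congr rfl fun k _ => ?_
            simp [hf, div_eq_mul_inv]
        _ ≤ (N : ℝ) * C K := by
            refine mul_le_mul_of_nonneg_left ?_ (by positivity)
            rw [hCeq]
            have : ∑ k ∈ Finset.Icc (K + 1) N, f k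
                = ∑ k ∈ Finset.Icc (K + 1) N, (Set.Ioi K).indicator f k := by
              refine Finset.sum_congr rfl fun k hk => ?_
              rw [Set.indicator_of_mem]
              exact Set.mem_Ioi.mpr (by have := (Finset.mem_Icc.mp hk).1; omega)
            rw [this]
            exact Summable.sum_le_tsum _ (fun i _ => Set.indicator_nonneg (fun k _ => hfnn k) i)
              (hsum.indicator _)
    rw [hu]
    rw [div_le_iff₀ (by exact_mod_cast hN)]
    linarith [hcard]
  have hbddAbove : ∀ K, Filter.IsBoundedUnder (· ≤ ·) Filter.atTop (u K) :=
    fun K => Filter.isBoundedUnder_of ⟨C K, hkey K⟩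
  have hpart1 : ∀ K, Filter.limsup (u K) Filter.atTop ≤ C K := by
    intro K
    refine Filter.limsup_le_of_le ?_ (Filter.Eventually.of_forall (hkey K))
    exact (Filter.isBoundedUnder_of ⟨0, hunn K⟩ :
      Filter.IsBoundedUnder (· ≥ ·) Filter.atTop (u K)).isCoboundedUnder_le
  refine ⟨hpart1, ?_⟩
  have hlimnn : ∀ K, 0 ≤ Filter.limsup (u K) Filter.atTop := by
    intro K
    exact Filter.le_limsup_of_frequently_le
      (Filter.Frequently.of_forall (hunn K)) (hbddAbove K)
  -- tail sums tend to zero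
  have hCtend : Filter.Tendsto C Filter.atTop (nhds 0) := by
    have heq : ∀ K : ℕ, C K = ∑' i : ℕ, f (i + (K + 1)) := by
      intro K
      let e : ℕ ≃ {k : ℕ // K < k} :=
        { toFun := fun i => ⟨i + (K + 1), by omega⟩
          invFun := fun k => (k : ℕ) - (K + 1)
          left_inv := fun i => by show i + (K + 1) - (K + 1) = i; omega
          right_inv := fun k => by
            ext
            have := k.2
            simp only
            omega }
      show (∑' k : {k : ℕ // K < k}, f (k : ℕ)) = ∑' i : ℕ, f (i + (K + 1))
      exact (Equiv.tsum_eq e (fun k : {k : ℕ // K < k} => f (k : ℕ))).symm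
    have := tendsto_sum_nat_add f
    have h2 : Filter.Tendsto (fun K : ℕ => ∑' i : ℕ, f (i + (K + 1)))
        Filter.atTop (nhds 0) :=
      this.comp (Filter.tendsto_add_atTop_nat 1)
    exact (Filter.tendsto_congr heq).mpr h2
  exact squeeze_zero hlimnn hpart1 hCtend
end

section
/- Let b ≥ 2 and let a be coprime to b. The set S_1 = {n^(a/b) : n ∈ ℕ, n is b-free} is linearly independent over ℚ as a subset of ℝ. -/
open Polynomial

lemma IsBFree.padicValNat_lt {b n p : ℕ} (hn : n ≠ 0) (hf : IsBFree b n) (hp : p.Prime) :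
    padicValNat p n < b := by
  have := Fact.mk hp
  by_contra! h
  exact hf p hp.one_lt ((padicValNat_dvd_iff_le hn).2 h)

lemma IsBFree.eq_of_pow_eq_pow_mul_pow {a b m n : ℕ} (hab : a.Coprime b) (hm : m ≠ 0)
    (hn : n ≠ 0) (hfm : IsBFree b m) (hfn : IsBFree b n) {q : ℚ}
    (h : (m : ℚ) ^ a = q ^ b * n ^ a) : m = n := by
  have hb : b ≠ 0 := by rintro rfl; exact hfm 2 one_lt_two (by simp)
  have hq : q ≠ 0 := by rintro rfl; simp [hb, hm] at h
  refine (Nat.eq_iff_prime_padicValNat_eq m n hm hn).2 fun p hp => ?_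
  have := Fact.mk hp
  have hval : (a : ℤ) * padicValNat p m = b * padicValRat p q + a * padicValNat p n := by
    have := congrArg (padicValRat p) h
    rwa [padicValRat.mul (pow_ne_zero _ hq) (pow_ne_zero _ (by exact_mod_cast hn)),
      padicValRat.pow, padicValRat.pow, padicValRat.pow, padicValRat.of_nat,
      padicValRat.of_nat] at this
  have hmod : a * padicValNat p n ≡ a * padicValNat p m [MOD b] :=
    Nat.modEq_iff_dvd.2 ⟨padicValRat p q, by rw [Nat.cast_mul, Nat.cast_mul]; linarith⟩
  exact (Nat.ModEq.cancel_left_of_coprime (Nat.coprime_comm.1 hab) hmod).symm.eq_of_lt_of_lt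
    (hfm.padicValNat_lt hm hp) (hfn.padicValNat_lt hn hp)

lemma Polynomial.nextCoeff_X_pow_sub_C {R : Type*} [Ring R] [Nontrivial R] {n : ℕ} (hn : 2 ≤ n)
    (c : R) : (X ^ n - C c).nextCoeff = 0 := by
  rw [nextCoeff_of_natDegree_pos (by rw [natDegree_X_pow_sub_C]; omega), natDegree_X_pow_sub_C]
  rw [coeff_sub, coeff_X_pow, coeff_C, if_neg (by omega), if_neg (by omega), sub_zero]

section RealRadical

variable {y : ℝ} {b : ℕ} {s : ℚ}

lemma isIntegral_of_pow_eq_ratCast (hb : b ≠ 0) (hs : y ^ b = s) : IsIntegral ℚ y :=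
  .of_pow (Nat.pos_of_ne_zero hb) (hs ▸ isIntegral_algebraMap)

lemma norm_eq_of_mem_aroots_minpoly (hy : 0 < y) (hb : b ≠ 0) (hs : y ^ b = s) {ρ : ℂ}
    (hρ : ρ ∈ (minpoly ℚ y).aroots ℂ) : ‖ρ‖ = y := by
  have hρb : ρ ^ b = s := by
    obtain ⟨u, hu⟩ := minpoly.dvd ℚ y (p := X ^ b - C s) (by simp [hs])
    have := congrArg (aeval ρ) hu
    rw [map_mul, (mem_aroots.1 hρ).2, zero_mul] at this
    simpa [sub_eq_zero] using this
  refine (pow_left_inj₀ (norm_nonneg ρ) hy.le hb).1 ?_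
  rw [← norm_pow, hρb, show ((s : ℚ) : ℂ) = ((s : ℝ) : ℂ) by push_cast; rfl,
    Complex.norm_real, ← hs, Real.norm_of_nonneg (by positivity)]

lemma pow_natDegree_minpoly (hy : 0 < y) (hb : b ≠ 0) (hs : y ^ b = s) :
    y ^ (minpoly ℚ y).natDegree = |(minpoly ℚ y).coeff 0| := by
  set μ := minpoly ℚ y
  have hμ : μ.Monic := minpoly.monic (isIntegral_of_pow_eq_ratCast hb hs)
  have hroots : (μ.aroots ℂ).map (‖·‖) = .replicate μ.natDegree y := by
    rw [Multiset.eq_replicate, Multiset.card_map, IsAlgClosed.card_aroots_eq_natDegree]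
    refine ⟨rfl, fun _ hr => ?_⟩
    obtain ⟨ρ, hρ, rfl⟩ := Multiset.mem_map.1 hr
    exact norm_eq_of_mem_aroots_minpoly hy hb hs hρ
  have h := congrArg norm <|
    (IsAlgClosed.splits (μ.map (algebraMap ℚ ℂ))).coeff_zero_eq_prod_roots_of_monic (hμ.map _)
  have hnorm : ‖(μ.aroots ℂ).prod‖ = ((μ.aroots ℂ).map (‖·‖)).prod :=
    map_multiset_prod (normHom : ℂ →*₀ ℝ) _
  rw [coeff_map, norm_mul, norm_pow, norm_neg, norm_one, one_pow, one_mul, ← aroots_def,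
    hnorm, hroots, Multiset.prod_replicate, eq_ratCast, Complex.norm_ratCast] at h
  exact_mod_cast h.symm

lemma minpoly_eq_X_pow_sub_C (hy : 0 < y) (hb : b ≠ 0) (hs : y ^ b = s) :
    minpoly ℚ y = X ^ (minpoly ℚ y).natDegree - C |(minpoly ℚ y).coeff 0| := by
  have hint := isIntegral_of_pow_eq_ratCast hb hs
  have hd : (minpoly ℚ y).natDegree ≠ 0 := (minpoly.natDegree_pos hint).ne'
  refine (eq_of_monic_of_dvd_of_natDegree_le (minpoly.monic hint) (monic_X_pow_sub_C _ hd)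
    (minpoly.dvd ℚ y ?_) natDegree_X_pow_sub_C.le).symm
  simp [pow_natDegree_minpoly hy hb hs]

lemma minpoly_nextCoeff_eq_zero (hy : 0 < y) (hb : b ≠ 0) (hs : y ^ b = s)
    (hirr : ∀ q : ℚ, y ≠ q) : (minpoly ℚ y).nextCoeff = 0 := by
  have hint := isIntegral_of_pow_eq_ratCast hb hs
  have hd : 2 ≤ (minpoly ℚ y).natDegree :=
    (minpoly.two_le_natDegree_iff hint).2 fun ⟨q, hq⟩ => hirr q hq.symm
  rw [minpoly_eq_X_pow_sub_C hy hb hs]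
  exact nextCoeff_X_pow_sub_C hd _

lemma trace_eq_zero_of_pow_eq_ratCast (K : IntermediateField ℚ ℝ) [FiniteDimensional ℚ K]
    {y : K} (hy : 0 < (y : ℝ)) (hb : b ≠ 0) (hs : (y : ℝ) ^ b = s)
    (hirr : ∀ q : ℚ, (y : ℝ) ≠ q) : Algebra.trace ℚ K y = 0 := by
  have hμ : minpoly ℚ y = minpoly ℚ (y : ℝ) := IntermediateField.minpoly_eq y
  rw [trace_eq_finrank_mul_minpoly_nextCoeff, hμ, minpoly_nextCoeff_eq_zero hy hb hs hirr,
    neg_zero, mul_zero]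

end RealRadical

theorem linearIndependent_of_pow_eq_ratCast {ι : Type*} {x : ι → ℝ} {b : ℕ} (hb : b ≠ 0)
    (hpos : ∀ i, 0 < x i) (hpow : ∀ i, ∃ q : ℚ, x i ^ b = q)
    (hdiv : ∀ i j (q : ℚ), x i / x j = q → i = j) : LinearIndependent ℚ x := by
  refine linearIndependent_iff_finset_linearIndependent.2 fun s => ?_
  refine Fintype.linearIndependent_iff.2 fun g hg τ => ?_
  let z : s → ℝ := fun i => x i / x τ
  have hzpow : ∀ i, ∃ q : ℚ, z i ^ b = q := fun i => by
    obtain ⟨p, hp⟩ := hpow i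
    obtain ⟨q, hq⟩ := hpow τ
    exact ⟨p / q, by simp [z, div_pow, hp, hq]⟩
  let K := IntermediateField.adjoin ℚ (Set.range z)
  have : FiniteDimensional ℚ K := IntermediateField.finiteDimensional_adjoin fun _ ⟨i, hi⟩ =>
    hi ▸ (hzpow i).elim fun _ hq => isIntegral_of_pow_eq_ratCast hb hq
  let w : s → K := fun i => ⟨z i, IntermediateField.subset_adjoin ℚ _ ⟨i, rfl⟩⟩
  have hz : ∑ i, g i • z i = 0 := by
    simpa [z, ← smul_div_assoc, ← Finset.sum_div] using congrArg (· / x τ) hg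
  have hw : ∑ i, g i • w i = 0 := Subtype.ext (by simpa [w] using hz)
  have htrace : ∀ i ≠ τ, Algebra.trace ℚ K (w i) = 0 := fun i hi =>
    (hzpow i).elim fun _ hq => trace_eq_zero_of_pow_eq_ratCast K
      (div_pos (hpos i) (hpos τ)) hb hq fun q h => hi (Subtype.ext (hdiv _ _ q h))
  have hwτ : w τ = 1 := Subtype.ext (div_self (hpos τ).ne')
  have := congrArg (Algebra.trace ℚ K) hw
  rw [map_sum, Finset.sum_eq_single τ (fun i _ hi => by rw [map_smul, htrace i hi, smul_zero])
    (by simp), map_smul, hwτ, map_zero, ← map_one (algebraMap ℚ K), Algebra.trace_algebraMap,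
    smul_eq_zero] at this
  exact this.resolve_right (by simp [Module.finrank_pos.ne'])

lemma Real.rpow_natCast_div_pow {x : ℝ} (hx : 0 ≤ x) (a : ℕ) {b : ℕ} (hb : b ≠ 0) :
    (x ^ ((a : ℝ) / b)) ^ b = x ^ a := by
  rw [← rpow_mul_natCast hx, div_mul_cancel₀ _ (by exact_mod_cast hb), rpow_natCast]

theorem stmt5_general (a b : ℕ) (hb : 2 ≤ b) (hab : Nat.gcd a b = 1) :
    LinearIndependent ℚ
      (fun s : {x : ℝ | ∃ n : ℕ, 0 < n ∧ IsBFree b n ∧ x = (n : ℝ) ^ ((a : ℝ) / b)} =>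
        (s : ℝ)) := by
  have hb0 : b ≠ 0 := by omega
  refine linearIndependent_of_pow_eq_ratCast hb0 ?_ ?_ ?_
  · rintro ⟨_, n, hn, -, rfl⟩
    positivity
  · rintro ⟨_, n, -, -, rfl⟩
    exact ⟨n ^ a, by push_cast; exact Real.rpow_natCast_div_pow n.cast_nonneg a hb0⟩
  · rintro ⟨_, m, hm, hfm, rfl⟩ ⟨_, n, hn, hfn, rfl⟩ q hq
    have hpow : (m : ℝ) ^ a = (q : ℝ) ^ b * (n : ℝ) ^ a := by
      rw [← Real.rpow_natCast_div_pow m.cast_nonneg a hb0,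
        ← Real.rpow_natCast_div_pow n.cast_nonneg a hb0, ← mul_pow, ← hq,
        div_mul_cancel₀ _ (by positivity)]
    obtain rfl := hfm.eq_of_pow_eq_pow_mul_pow hab hm.ne' hn.ne' hfn (q := q)
      (by exact_mod_cast hpow)
    rfl

theorem stmt5 (a b : ℕ) (ha : 0 < a) (hb : 2 ≤ b) (hab : Nat.gcd a b = 1) :
    LinearIndependent ℚ
      (fun s : {x : ℝ | ∃ n : ℕ, 0 < n ∧ IsBFree b n ∧ x = (n : ℝ) ^ ((a : ℝ) / b)} =>
        (s : ℝ)) :=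
  stmt5_general a b hb hab
end

section
/- Let S be a finite set of real numbers that is linearly independent over ℚ, and let S = S_1 ∪ ⋯ ∪ S_Q be a partition of S into Q sets. Then there exists a real number r such that for every q ∈ {1,…,Q} and every s ∈ S_q, the fractional part of r·s lies in the open interval ((q−1)/Q, q/Q). -/
/-!
Kronecker's theorem via a Bohr-type kernel. For `P(r) = ∏ᵢ (2 cos π(r sᵢ - tᵢ))^(2N)`, expanding
each factor binomially writes `P` as a finite sum of exponentials `exp(i λ r)`; linear independence
of the `sᵢ` over `ℚ` makes every frequency `λ` nonzero except the constant one, whose coefficient is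
`centralBinom N ^ n`. Hence the mean of `P` over `[0, T]` tends to `centralBinom N ^ n` as `T → ∞`.
If for every `r` some `r sᵢ - tᵢ` stayed at distance `≥ ε` from `ℤ`, the corresponding factor would
be at most `4 c` with `c = (1 + cos 2πε) / 2 < 1`, so `P ≤ (c 4ⁿ)^N` everywhere; this is smaller
than `centralBinom N ^ n ≥ (4^N / (2N + 1))ⁿ` for large `N`. Choosing the targets `tᵢ` as the
midpoints of the prescribed intervals gives the theorem.
-/

open Real Finset Complex

lemma cos_two_pi_mul_le_of_le_abs_sub_round {x ε : ℝ} (hε : 0 ≤ ε)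
    (h : ε ≤ |x - round x|) : Real.cos (2 * π * x) ≤ Real.cos (2 * π * ε) := by
  have hpi := Real.pi_pos
  have hx : |x - round x| ≤ 1 / 2 := abs_sub_round x
  calc Real.cos (2 * π * x) = Real.cos (2 * π * |x - round x|) := by
        rw [← Real.cos_abs (2 * π * |x - round x|), abs_mul, abs_abs, ← abs_mul,
          Real.cos_abs, mul_sub, ← Real.cos_sub_int_mul_two_pi _ (round x)]
        ring_nf
    _ ≤ Real.cos (2 * π * ε) :=
        Real.cos_le_cos_of_nonneg_of_le_pi (by positivity) (by nlinarith) (by gcongr)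

lemma two_cos_pow_two_mul_eq_sum (θ : ℝ) (N : ℕ) :
    ((2 * Real.cos θ : ℝ) : ℂ) ^ (2 * N) =
      ∑ k ∈ range (2 * N + 1),
        ((2 * N).choose k : ℂ) * exp ((2 * ((k : ℝ) - N) * θ : ℝ) * I) := by
  have h2cos : ((2 * Real.cos θ : ℝ) : ℂ) = exp (θ * I) + exp (-θ * I) := by
    push_cast
    rw [Complex.cos]
    ring
  rw [h2cos, add_pow]
  refine sum_congr rfl fun k hk => ?_
  have hk : k ≤ 2 * N := Nat.lt_succ_iff.mp (mem_range.mp hk)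
  rw [← Complex.exp_nat_mul, ← Complex.exp_nat_mul, ← Complex.exp_add, mul_comm]
  congr 2
  push_cast [Nat.cast_sub hk]
  ring

lemma norm_integral_exp_mul_I_le {a : ℝ} (ha : a ≠ 0) (T : ℝ) :
    ‖∫ r in (0 : ℝ)..T, exp (a * I * r)‖ ≤ 2 / |a| := by
  have haI : (a : ℂ) * I ≠ 0 := mul_ne_zero (ofReal_ne_zero.mpr ha) I_ne_zero
  have hexp : ‖exp (a * I * T)‖ = 1 := by
    rw [mul_right_comm, ← ofReal_mul, norm_exp_ofReal_mul_I]
  rw [integral_exp_mul_complex haI, norm_div, norm_mul, norm_I, mul_one, norm_real,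
    Real.norm_eq_abs, ofReal_zero, mul_zero, Complex.exp_zero]
  gcongr
  calc ‖exp (a * I * T) - 1‖ ≤ ‖exp (a * I * T)‖ + ‖(1 : ℂ)‖ := norm_sub_le _ _
    _ = 2 := by rw [hexp, norm_one]; norm_num

lemma abs_integral_sub_mul_le_of_eq_add_sum_exp {K : Type*} {f : ℝ → ℝ} {C : ℝ}
    {s : Finset K} {c : K → ℂ} {a : K → ℝ} (ha : ∀ k ∈ s, a k ≠ 0)
    (hf : ∀ r, (f r : ℂ) = C + ∑ k ∈ s, c k * exp (a k * I * r)) (T : ℝ) :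
    |(∫ r in (0 : ℝ)..T, f r) - C * T| ≤ ∑ k ∈ s, ‖c k‖ * (2 / |a k|) := by
  have hcont : ∀ k, Continuous fun r : ℝ => c k * exp (a k * I * r) := fun k => by fun_prop
  have hint : ((∫ r in (0 : ℝ)..T, f r : ℝ) : ℂ) =
      C * T + ∑ k ∈ s, c k * ∫ r in (0 : ℝ)..T, exp (a k * I * r) := by
    rw [← intervalIntegral.integral_ofReal, intervalIntegral.integral_congr (fun r _ => hf r),
      intervalIntegral.integral_add intervalIntegrable_const
        ((continuous_finsetSum _ fun k _ => hcont k).intervalIntegrable _ _),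
      intervalIntegral.integral_finsetSum fun k _ => (hcont k).intervalIntegrable _ _]
    simp [intervalIntegral.integral_const_mul, mul_comm]
  rw [← Real.norm_eq_abs, ← norm_real, ofReal_sub, hint, ofReal_mul, add_sub_cancel_left]
  refine (norm_sum_le _ _).trans (sum_le_sum fun k hk => ?_)
  rw [norm_mul]
  gcongr
  exact norm_integral_exp_mul_I_le (ha k hk) T

lemma exists_lt_of_eq_add_sum_exp {K : Type*} {f : ℝ → ℝ} {C D : ℝ}
    {s : Finset K} {c : K → ℂ} {a : K → ℝ} (ha : ∀ k ∈ s, a k ≠ 0)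
    (hf : ∀ r, (f r : ℂ) = C + ∑ k ∈ s, c k * exp (a k * I * r)) (hD : D < C) :
    ∃ r, D < f r := by
  by_contra! hfD
  set W := ∑ k ∈ s, ‖c k‖ * (2 / |a k|)
  have hW : 0 ≤ W := sum_nonneg fun k _ => by positivity
  have hf_cont : Continuous f := by
    have : f = fun r : ℝ => ((C : ℂ) + ∑ k ∈ s, c k * exp (a k * I * r)).re := by
      funext r; rw [← hf r, ofReal_re]
    rw [this]; fun_prop
  set T := (W + 1) / (C - D)
  have hT : (C - D) * T = W + 1 := mul_div_cancel₀ _ (sub_ne_zero.mpr hD.ne')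
  have hupper : (∫ r in (0 : ℝ)..T, f r) ≤ D * T := by
    have := intervalIntegral.integral_mono_on (μ := MeasureTheory.volume)
      (div_pos (by linarith) (sub_pos.mpr hD)).le (hf_cont.intervalIntegrable 0 T)
      intervalIntegrable_const fun r _ => hfD r
    simpa [mul_comm] using this
  have hlower := (abs_le.mp (abs_integral_sub_mul_le_of_eq_add_sum_exp ha hf T)).1
  nlinarith

lemma exists_mul_four_pow_pow_lt_centralBinom_pow {c : ℝ} (hc₀ : 0 ≤ c) (hc₁ : c < 1)
    (n : ℕ) : ∃ N : ℕ, (c * 4 ^ n) ^ N < (N.centralBinom : ℝ) ^ n := by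
  have hlim : Filter.Tendsto (fun N : ℕ => 3 ^ n * ((N : ℝ) ^ n * c ^ N)) Filter.atTop
      (nhds 0) := by
    simpa using (tendsto_pow_const_mul_const_pow_of_lt_one n hc₀ hc₁).const_mul (3 ^ n)
  obtain ⟨N, hN, hN₁⟩ :=
    ((hlim.eventually_lt_const one_pos).and (Filter.eventually_ge_atTop 1)).exists
  refine ⟨N, ?_⟩
  have hN₁' : (1 : ℝ) ≤ N := by exact_mod_cast hN₁
  have hcb : (4 : ℝ) ^ N ≤ (2 * N + 1) * N.centralBinom := by
    exact_mod_cast Nat.four_pow_le_two_mul_add_one_mul_central_binom N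
  calc (c * 4 ^ n) ^ N = c ^ N * ((4 : ℝ) ^ N) ^ n := by ring
    _ ≤ c ^ N * ((2 * N + 1) * N.centralBinom) ^ n := by gcongr
    _ = (2 * N + 1) ^ n * c ^ N * (N.centralBinom : ℝ) ^ n := by rw [mul_pow]; ring
    _ ≤ (3 * N) ^ n * c ^ N * (N.centralBinom : ℝ) ^ n := by gcongr; linarith
    _ < 1 * (N.centralBinom : ℝ) ^ n :=
        mul_lt_mul_of_pos_right (by rwa [mul_pow, mul_assoc])
          (pow_pos (by exact_mod_cast N.centralBinom_pos) n)
    _ = (N.centralBinom : ℝ) ^ n := one_mul _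

noncomputable section

variable {ι : Type*} [Fintype ι]

namespace Kronecker

def poly (s t : ι → ℝ) (N : ℕ) (r : ℝ) : ℝ :=
  ∏ i, (2 * Real.cos (π * (r * s i - t i))) ^ (2 * N)

def freq (s : ι → ℝ) (N : ℕ) (κ : ι → ℕ) : ℝ :=
  2 * π * ∑ i, ((κ i : ℝ) - N) * s i

def coeff (t : ι → ℝ) (N : ℕ) (κ : ι → ℕ) : ℂ :=
  (∏ i, ((2 * N).choose (κ i) : ℂ)) * exp (-freq t N κ * I)

lemma poly_eq_sum [DecidableEq ι] (s t : ι → ℝ) (N : ℕ) (r : ℝ) :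
    (poly s t N r : ℂ) = ∑ κ ∈ Fintype.piFinset fun _ => range (2 * N + 1),
      coeff t N κ * exp (freq s N κ * I * r) := by
  rw [poly, ofReal_prod]
  simp_rw [ofReal_pow, two_cos_pow_two_mul_eq_sum, prod_univ_sum]
  refine sum_congr rfl fun κ _ => ?_
  have hphase : ∑ i, 2 * ((κ i : ℝ) - N) * (π * (r * s i - t i)) =
      -freq t N κ + freq s N κ * r := by
    simp only [freq, mul_sum, sum_mul, ← sum_neg_distrib, ← sum_add_distrib]
    exact sum_congr rfl fun i _ => by ring
  rw [prod_mul_distrib, ← Complex.exp_sum, ← sum_mul, ← ofReal_sum, hphase, ofReal_add,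
    add_mul, Complex.exp_add, coeff, ofReal_neg, ofReal_mul, mul_right_comm _ (r : ℂ)]
  ring

lemma freq_ne_zero {s : ι → ℝ} (hs : LinearIndependent ℚ s) {N : ℕ} {κ : ι → ℕ}
    (hκ : κ ≠ fun _ => N) : freq s N κ ≠ 0 := by
  intro h
  have hsum : ∑ i, ((κ i : ℚ) - N) • s i = 0 := by
    have h2pi : 2 * π ≠ 0 := by positivity
    simpa [freq, h2pi, Rat.smul_def] using h
  apply hκ
  funext i
  exact_mod_cast sub_eq_zero.mp (Fintype.linearIndependent_iff.mp hs _ hsum i)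

lemma poly_eq_add_sum [DecidableEq ι] (s t : ι → ℝ) (N : ℕ) (r : ℝ) :
    (poly s t N r : ℂ) = ((N.centralBinom : ℝ) ^ Fintype.card ι : ℝ) +
      ∑ κ ∈ (Fintype.piFinset fun _ => range (2 * N + 1)).erase fun _ => N,
        coeff t N κ * exp (freq s N κ * I * r) := by
  have hmem : (fun _ => N) ∈ Fintype.piFinset fun (_ : ι) => range (2 * N + 1) :=
    Fintype.mem_piFinset.mpr fun _ => mem_range.mpr (by omega)
  rw [poly_eq_sum, ← add_sum_erase _ _ hmem]
  simp [coeff, freq, Nat.centralBinom_eq_two_mul_choose]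

lemma poly_le_of_le_abs_sub_round (s t : ι → ℝ) (N : ℕ) (r : ℝ) {ε : ℝ} (hε : 0 ≤ ε)
    (i₀ : ι)
    (h : ε ≤ |(r * s i₀ - t i₀) - round (r * s i₀ - t i₀)|) :
    poly s t N r ≤ ((1 + Real.cos (2 * π * ε)) / 2 * 4 ^ Fintype.card ι) ^ N := by
  have hprod : ∏ i, Real.cos (π * (r * s i - t i)) ^ 2 ≤ (1 + Real.cos (2 * π * ε)) / 2 :=
    calc ∏ i, Real.cos (π * (r * s i - t i)) ^ 2
        ≤ ∏ i ∈ {i₀}, Real.cos (π * (r * s i - t i)) ^ 2 :=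
          prod_le_prod_of_subset_of_le_one (subset_univ _) (fun _ _ => sq_nonneg _)
            fun _ _ _ => Real.cos_sq_le_one _
      _ = (1 + Real.cos (2 * π * (r * s i₀ - t i₀))) / 2 := by
          rw [prod_singleton, Real.cos_sq]; ring_nf
      _ ≤ (1 + Real.cos (2 * π * ε)) / 2 := by
          gcongr; exact cos_two_pi_mul_le_of_le_abs_sub_round hε h
  have hpoly :
      poly s t N r = (4 ^ Fintype.card ι * ∏ i, Real.cos (π * (r * s i - t i)) ^ 2) ^ N := by
    simp only [poly, pow_mul, mul_pow, prod_mul_distrib, prod_const, card_univ, ← prod_pow]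
    ring
  rw [hpoly, mul_comm _ (4 ^ _)]
  gcongr

end Kronecker

theorem kronecker_approximation {s : ι → ℝ} (hs : LinearIndependent ℚ s)
    (t : ι → ℝ) {ε : ℝ} (hε : 0 < ε) : ∃ r : ℝ, ∀ i, ∃ m : ℤ, |r * s i - t i - m| < ε := by
  classical
  by_contra! hfar
  have hε₂ : ε ≤ 1 / 2 := by
    obtain ⟨i, hi⟩ := hfar 0
    exact (hi _).trans (abs_sub_round _)
  have hc₀ : 0 ≤ (1 + Real.cos (2 * π * ε)) / 2 := by
    linarith [Real.neg_one_le_cos (2 * π * ε)]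
  have hc₁ : (1 + Real.cos (2 * π * ε)) / 2 < 1 := by
    have hpi := Real.pi_pos
    have : Real.cos (2 * π * ε) < Real.cos 0 :=
      Real.cos_lt_cos_of_nonneg_of_le_pi le_rfl (by nlinarith) (by positivity)
    rw [Real.cos_zero] at this
    linarith
  obtain ⟨N, hN⟩ := exists_mul_four_pow_pow_lt_centralBinom_pow hc₀ hc₁ (Fintype.card ι)
  obtain ⟨r, hr⟩ := exists_lt_of_eq_add_sum_exp
    (fun κ hκ => Kronecker.freq_ne_zero hs (ne_of_mem_erase hκ))
    (Kronecker.poly_eq_add_sum s t N) hN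
  obtain ⟨i₀, hi₀⟩ := hfar r
  exact (Kronecker.poly_le_of_le_abs_sub_round s t N r hε.le i₀ (hi₀ _)).not_gt hr

end

lemma Int.fract_mem_Ioo_of_abs_sub_sub_lt {x a b : ℝ} {m : ℤ} (ha : 0 ≤ a) (hb : b ≤ 1)
    (h : |x - (a + b) / 2 - m| < (b - a) / 2) : Int.fract x ∈ Set.Ioo a b := by
  obtain ⟨hlo, hhi⟩ := abs_lt.mp h
  rw [(Int.fract_eq_iff (b := x - m)).mpr ⟨by linarith, by linarith, m, by ring⟩]
  constructor <;> linarith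

theorem stmt7 (S : Set ℝ) (hS : S.Finite)
    (hind : LinearIndependent ℚ (fun s : S => (s : ℝ)))
    (Q : ℕ) (hQ : 0 < Q) (part : Fin Q → Set ℝ)
    (hcover : ⋃ q, part q = S)
    (hdisj : Pairwise (Function.onFun Disjoint part)) :
    ∃ r : ℝ, ∀ q : Fin Q, ∀ s ∈ part q,
      Int.fract (r * s) ∈ Set.Ioo ((q : ℝ) / Q) (((q : ℕ) + 1 : ℝ) / Q) := by
  have : Fintype S := hS.fintype
  have hpart (x : S) : ∃ q, (x : ℝ) ∈ part q := Set.mem_iUnion.mp (hcover ▸ x.2)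
  choose qS hqS using hpart
  obtain ⟨r, hr⟩ := kronecker_approximation hind
    (fun x => ((qS x : ℝ) / Q + (((qS x : ℕ) + 1 : ℝ) / Q)) / 2)
    (ε := 1 / (2 * Q)) (by positivity)
  refine ⟨r, fun q s hs => ?_⟩
  have hsS : s ∈ S := hcover ▸ Set.mem_iUnion.mpr ⟨q, hs⟩
  have hq : qS ⟨s, hsS⟩ = q :=
    by_contra fun hne => Set.disjoint_left.mp (hdisj hne) (hqS _) hs
  obtain ⟨m, hm⟩ := hr ⟨s, hsS⟩
  rw [hq] at hm
  refine Int.fract_mem_Ioo_of_abs_sub_sub_lt (by positivity)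
    (div_le_one_of_le₀ (by exact_mod_cast q.isLt) (Nat.cast_nonneg Q)) (hm.trans_eq ?_)
  field_simp
  ring
end

section
/- Let α₁ = a₁/b₁, …, α_l = a_l/b_l be non-integer positive rationals in lowest terms with the b_i pairwise coprime. Then every element of S₁ = {n₁^{α₁}⋯n_l^{α_l} : each n_i is b_i-free} has a unique representation: if n₁^{α₁}⋯n_l^{α_l} = m₁^{α₁}⋯m_l^{α_l} with all n_i b_i-free and all m_i b_i-free, then n_i = m_i for all i. -/
theorem stmt10 (l : ℕ) (hl : 0 < l) (a b : Fin l → ℕ)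
    (ha : ∀ i, 0 < a i) (hb : ∀ i, 2 ≤ b i)
    (hcop : ∀ i, Nat.gcd (a i) (b i) = 1)
    (hbb : ∀ i j, i ≠ j → Nat.gcd (b i) (b j) = 1)
    (n m : Fin l → ℕ) (hn : ∀ i, 0 < n i) (hm : ∀ i, 0 < m i)
    (hnf : ∀ i, IsBFree (b i) (n i)) (hmf : ∀ i, IsBFree (b i) (m i))
    (heq : ∏ i, (n i : ℝ) ^ ((a i : ℝ) / (b i : ℝ))
          = ∏ i, (m i : ℝ) ^ ((a i : ℝ) / (b i : ℝ))) :
    n = m := by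
  classical
  set B : ℕ := ∏ j, b j with hB
  set P : Fin l → ℕ := fun i => ∏ j ∈ Finset.univ.erase i, b j with hP
  have hBP : ∀ i, B = b i * P i := fun i =>
    (Finset.mul_prod_erase _ _ (Finset.mem_univ i)).symm
  set c : Fin l → ℕ := fun i => a i * P i with hc
  -- Step 1: natural number equality
  have key : ∀ (f : Fin l → ℕ), (∀ i, 0 < f i) →
      (∏ i, (f i : ℝ) ^ ((a i : ℝ) / (b i : ℝ))) ^ B
        = ((∏ i, f i ^ c i : ℕ) : ℝ) := by
    intro f hf
    push_cast
    rw [← Finset.prod_pow]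
    refine Finset.prod_congr rfl fun i _ => ?_
    have hb0 : (0:ℝ) < (b i : ℝ) := by
      have := hb i; exact_mod_cast by omega
    have hfpos : (0:ℝ) ≤ (f i : ℝ) := (f i).cast_nonneg
    rw [← Real.rpow_natCast ((f i:ℝ) ^ ((a i : ℝ) / (b i : ℝ))) B,
      ← Real.rpow_mul hfpos, ← Real.rpow_natCast (f i : ℝ) (c i)]
    congr 1
    have hBr : (B:ℝ) = (b i : ℝ) * (P i : ℝ) := by exact_mod_cast hBP i
    rw [hBr, hc]
    push_cast
    field_simp
  have hnat : (∏ i, n i ^ c i) = ∏ i, m i ^ c i := by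
    have h1 := key n hn
    have h2 := key m hm
    rw [heq, h2] at h1
    exact_mod_cast h1.symm
  -- Step 2: factorization equalities
  have hfacteq : ∀ p, ∑ i, c i * (n i).factorization p
      = ∑ i, c i * (m i).factorization p := by
    intro p
    have hne : ∀ (f : Fin l → ℕ), (∀ i, 0 < f i) → ∀ i ∈ Finset.univ,
        f i ^ c i ≠ 0 := fun f hf i _ => pow_ne_zero _ (hf i).ne'
    have := congrArg (fun x : ℕ => x.factorization p) hnat
    simpa only [Nat.factorization_prod (hne n hn), Nat.factorization_prod (hne m hm),
      Nat.factorization_pow, Finset.sum_apply', Finsupp.smul_apply,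
      smul_eq_mul] using this
  -- bounds from b-freeness
  have hbound : ∀ (f : Fin l → ℕ), (∀ i, 0 < f i) → (∀ i, IsBFree (b i) (f i)) →
      ∀ k p, p.Prime → (f k).factorization p < b k := by
    intro f hf hff k p hp
    by_contra hle
    push_neg at hle
    exact hff k p hp.one_lt
      ((Nat.Prime.pow_dvd_iff_le_factorization hp (hf k).ne').mpr hle)
  -- main pointwise equality of factorizations
  funext k
  have hbk2 := hb k
  haveI : NeZero (b k) := ⟨by omega⟩
  have hcopk : Nat.Coprime (c k) (b k) := by
    refine Nat.Coprime.mul (hcop k) ?_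
    exact Nat.Coprime.prod_left fun j hj => hbb j k (Finset.ne_of_mem_erase hj)
  have hdvd : ∀ i, i ≠ k → b k ∣ c i := by
    intro i hik
    exact Dvd.dvd.mul_left
      (Finset.dvd_prod_of_mem _ (Finset.mem_erase.mpr ⟨hik.symm, Finset.mem_univ _⟩)) _
  have hfeq : (n k).factorization = (m k).factorization := by
    ext p
    by_cases hp : p.Prime
    · -- work mod b k
      have h0 := congrArg (fun x : ℕ => (x : ZMod (b k))) (hfacteq p)
      push_cast at h0
      have hz : ∀ (f : Fin l → ℕ) (i : Fin l), i ≠ k →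
          ((c i : ZMod (b k)) * ((f i).factorization p : ZMod (b k)) = 0) := by
        intro f i hik
        have : (c i : ZMod (b k)) = 0 := (ZMod.natCast_eq_zero_iff _ _).mpr (hdvd i hik)
        rw [this, zero_mul]
      rw [Fintype.sum_eq_single k (hz n), Fintype.sum_eq_single k (hz m)] at h0
      have hu : IsUnit ((c k : ZMod (b k))) := (ZMod.isUnit_iff_coprime _ _).mpr hcopk
      have hzeq : ((n k).factorization p : ZMod (b k)) = ((m k).factorization p : ZMod (b k)) :=
        hu.mul_right_injective h0
      have hmodeq := (ZMod.natCast_eq_natCast_iff _ _ _).mp hzeq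
      have h1 := hbound n hn hnf k p hp
      have h2 := hbound m hm hmf k p hp
      have := hmodeq.eq_of_lt_of_lt h1 h2
      exact this
    · rw [Nat.factorization_eq_zero_of_not_prime _ hp,
        Nat.factorization_eq_zero_of_not_prime _ hp]
  exact Nat.factorization_inj (by simp [(hn k).ne']) (by simp [(hm k).ne']) hfeq
end

section
/- Let α₁ = a₁/b₁, …, α_l = a_l/b_l be non-integer positive rationals in lowest terms with the b_i pairwise coprime. Let (e_k) enumerate {∏_{i≤l} n_i^{b_i} : n_i ∈ ℕ} in increasing order and set S_k = e_k · S₁ where S₁ = {n₁^{α₁}⋯n_l^{α_l} : each n_i is b_i-free}. Then the sets S_k are pairwise disjoint. -/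
lemma factorization_lt_of_isBFree {b n : ℕ} (h : IsBFree b n) (p : ℕ) (hp : p.Prime) :
    n.factorization p < b := by
  by_contra hge
  push_neg at hge
  exact h p hp.one_lt ((pow_dvd_pow p hge).trans (Nat.ordProj_dvd n p))

lemma pow_prod_rpow {l : ℕ} (a b : Fin l → ℕ) (hb : ∀ i, 0 < b i) (n : Fin l → ℕ) :
    (∏ i, (n i : ℝ) ^ ((a i : ℝ) / (b i : ℝ))) ^ (∏ i, b i) =
      ((∏ i, (n i) ^ (a i * ∏ j ∈ Finset.univ.erase i, b j) : ℕ) : ℝ) := by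
  push_cast
  rw [← Finset.prod_pow]
  refine Finset.prod_congr rfl fun i _ => ?_
  rw [← Real.rpow_natCast ((n i : ℝ) ^ ((a i : ℝ) / (b i : ℝ))) (∏ i, b i),
    ← Real.rpow_mul (Nat.cast_nonneg _),
    ← Real.rpow_natCast (n i : ℝ) (a i * ∏ j ∈ Finset.univ.erase i, b j)]
  congr 1
  have hbi : (b i : ℝ) ≠ 0 := Nat.cast_ne_zero.mpr (hb i).ne'
  have hB : (∏ j, b j) = b i * ∏ j ∈ Finset.univ.erase i, b j :=
    (Finset.mul_prod_erase _ _ (Finset.mem_univ i)).symm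
  rw [hB]
  push_cast
  field_simp

lemma fact_apply {l : ℕ} (B : ℕ) (d : Fin l → ℕ) (N : ℕ) (hN : N ≠ 0) (w : Fin l → ℕ)
    (hw : ∀ j, w j ≠ 0) (p : ℕ) :
    (N ^ B * ∏ j, w j ^ d j).factorization p =
      B * N.factorization p + ∑ j, d j * (w j).factorization p := by
  rw [Nat.factorization_mul (pow_ne_zero _ hN)
      (Finset.prod_ne_zero_iff.mpr fun j _ => pow_ne_zero _ (hw j)),
    Nat.factorization_pow, Nat.factorization_prod (fun j _ => pow_ne_zero _ (hw j))]
  simp [Nat.factorization_pow, Finset.sum_apply', mul_comm]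

theorem stmt11 (l : ℕ) (hl : 0 < l) (a b : Fin l → ℕ)
    (ha : ∀ i, 0 < a i) (hb : ∀ i, 2 ≤ b i)
    (hcop : ∀ i, Nat.gcd (a i) (b i) = 1)
    (hbb : ∀ i j, i ≠ j → Nat.gcd (b i) (b j) = 1)
    (e : ℕ → ℕ) (he : StrictMono e)
    (hrange : Set.range e = {N : ℕ | ∃ n : Fin l → ℕ, (∀ i, 0 < n i) ∧ N = ∏ i, (n i) ^ (b i)})
    (k₁ k₂ : ℕ) (hk : k₁ ≠ k₂) :
    Disjoint
      ((fun x => (e k₁ : ℝ) * x) ''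
        {x : ℝ | ∃ n : Fin l → ℕ, (∀ i, 0 < n i ∧ IsBFree (b i) (n i)) ∧
          x = ∏ i, (n i : ℝ) ^ ((a i : ℝ) / (b i : ℝ))})
      ((fun x => (e k₂ : ℝ) * x) ''
        {x : ℝ | ∃ n : Fin l → ℕ, (∀ i, 0 < n i ∧ IsBFree (b i) (n i)) ∧
          x = ∏ i, (n i : ℝ) ^ ((a i : ℝ) / (b i : ℝ))}) := by
  rw [Set.disjoint_left]
  rintro x ⟨y, ⟨n, hn, rfl⟩, rfl⟩ ⟨z, ⟨m, hm, rfl⟩, hx⟩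
  -- hx : e k₂ * ∏ (m i)^(a i / b i) = e k₁ * ∏ (n i)^(a i / b i)
  have hbpos : ∀ i, 0 < b i := fun i => lt_of_lt_of_le (by norm_num) (hb i)
  -- positivity of e k₁, e k₂
  have hE : ∀ k : ℕ, 0 < e k := by
    intro k
    have h1 : e k ∈ Set.range e := ⟨k, rfl⟩
    rw [hrange] at h1
    obtain ⟨u, hu, hEu⟩ := h1
    rw [hEu]
    exact Finset.prod_pos fun i _ => pow_pos (hu i) _
  set B := ∏ i, b i with hBdef
  set c : Fin l → ℕ := fun i => ∏ j ∈ Finset.univ.erase i, b j with hcdef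
  set d : Fin l → ℕ := fun i => a i * c i with hddef
  -- raise hx to the B-th power and cast to ℕ
  have hx2 := congrArg (fun t : ℝ => t ^ B) hx
  simp only [mul_pow] at hx2
  rw [pow_prod_rpow a b hbpos n, pow_prod_rpow a b hbpos m] at hx2
  have hnat : (e k₂) ^ B * ∏ i, (m i) ^ d i = (e k₁) ^ B * ∏ i, (n i) ^ d i := by
    have := hx2
    push_cast at this
    exact_mod_cast this
  -- valuations
  have key : ∀ i, ∀ p : ℕ, (n i).factorization p = (m i).factorization p := by
    intro i p
    by_cases hp : p.Prime
    · have F := congrArg (fun t => t.factorization p) hnat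
      rw [fact_apply B d _ (hE k₂).ne' m (fun j => (hm j).1.ne'),
        fact_apply B d _ (hE k₁).ne' n (fun j => (hn j).1.ne')] at F
      -- divisibility facts
      have hdvdB : b i ∣ B := Finset.dvd_prod_of_mem b (Finset.mem_univ i)
      have hdvd : ∀ j, j ≠ i → b i ∣ d j := by
        intro j hj
        exact Dvd.dvd.mul_left
          (Finset.dvd_prod_of_mem b (Finset.mem_erase.mpr ⟨Ne.symm hj, Finset.mem_univ i⟩)) _
      have hside : ∀ (E₀ : ℕ) (w : Fin l → ℕ),
          B * E₀ + ∑ j, d j * w j ≡ d i * w i [MOD b i] := by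
        intro E₀ w
        have hsum : ∑ j, d j * w j = d i * w i + ∑ j ∈ Finset.univ.erase i, d j * w j :=
          (Finset.add_sum_erase _ _ (Finset.mem_univ i)).symm
        have hT : b i ∣ B * E₀ + ∑ j ∈ Finset.univ.erase i, d j * w j := by
          refine dvd_add (hdvdB.mul_right _) (Finset.dvd_sum fun j hj => ?_)
          exact (hdvd j (Finset.mem_erase.mp hj).1).mul_right _
        calc B * E₀ + ∑ j, d j * w j
            = d i * w i + (B * E₀ + ∑ j ∈ Finset.univ.erase i, d j * w j) := by
              rw [hsum]; ring
          _ ≡ d i * w i + 0 [MOD b i] :=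
              Nat.ModEq.add_left _ (Nat.modEq_zero_iff_dvd.mpr hT)
          _ = d i * w i := by ring
      have cong : d i * (n i).factorization p ≡ d i * (m i).factorization p [MOD b i] := by
        have h1 := hside ((e k₁).factorization p) (fun j => (n j).factorization p)
        have h2 := hside ((e k₂).factorization p) (fun j => (m j).factorization p)
        exact h1.symm.trans (F ▸ h2)
      have hcopd : Nat.gcd (b i) (d i) = 1 := by
        have h1 : Nat.Coprime (a i) (b i) := hcop i
        have h2 : Nat.Coprime (c i) (b i) :=
          Nat.Coprime.prod_left fun j hj => hbb j i (Finset.mem_erase.mp hj).1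
        exact Nat.Coprime.symm (h1.mul h2)
      have cong2 := Nat.ModEq.cancel_left_of_coprime hcopd cong
      have hlt1 : (n i).factorization p < b i := factorization_lt_of_isBFree (hn i).2 p hp
      have hlt2 : (m i).factorization p < b i := factorization_lt_of_isBFree (hm i).2 p hp
      have := cong2
      unfold Nat.ModEq at this
      rwa [Nat.mod_eq_of_lt hlt1, Nat.mod_eq_of_lt hlt2] at this
    · rw [Nat.factorization_eq_zero_of_not_prime _ hp, Nat.factorization_eq_zero_of_not_prime _ hp]
  have hnm : n = m := by
    funext i
    exact Nat.factorization_inj (Set.mem_setOf.mpr (hn i).1.ne')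
      (Set.mem_setOf.mpr (hm i).1.ne') (Finsupp.ext (key i))
  -- conclude e k₁ = e k₂
  rw [hnm] at hx
  have hPpos : 0 < ∏ i, (m i : ℝ) ^ ((a i : ℝ) / (b i : ℝ)) :=
    Finset.prod_pos fun i _ => Real.rpow_pos_of_pos (by exact_mod_cast (hm i).1) _
  have : (e k₂ : ℝ) = (e k₁ : ℝ) := mul_right_cancel₀ hPpos.ne' hx
  exact hk (he.injective (Nat.cast_inj.mp this)).symm
end

section
/- Let α₁ = a₁/b₁, …, α_l = a_l/b_l be positive non-integer rationals. Fix i ≤ l and L ∈ ℕ. For N > 0, let S(N) = #{(n₁,…,n_l) ∈ ℕ^l : n₁^{α₁}⋯n_l^{α_l} ≤ N} and T_i^L(N) = #{(n₁,…,n_l) ∈ ℕ^l : n₁^{α₁}⋯ (L^{b_i} n_i)^{α_i} ⋯ n_l^{α_l} ≤ N}. Then T_i^L(N)/S(N) ≤ 1/L^{b_i} whenever S(N) > 0. -/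
lemma keyrec (M v v' j j' : ℕ) (hv : 0 < v) (hv' : 0 < v')
    (hj : j < M) (hj' : j' < M) (h : M * v - j = M * v' - j') : v = v' ∧ j = j' := by
  have h1 : M ≤ M * v := Nat.le_mul_of_pos_right M hv
  have h2 : M ≤ M * v' := Nat.le_mul_of_pos_right M hv'
  have hvv : v = v' := by
    rcases lt_trichotomy v v' with hlt | he | hgt
    · exfalso
      have : M * v + M ≤ M * v' := by nlinarith
      omega
    · exact he
    · exfalso
      have : M * v' + M ≤ M * v := by nlinarith
      omega
  subst hvv
  omega

theorem stmt12 (l : ℕ) (a b : Fin l → ℕ) (ha : ∀ i, 0 < a i) (hb : ∀ i, 2 ≤ b i)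
    (hcop : ∀ i, Nat.gcd (a i) (b i) = 1) (i₀ : Fin l) (L : ℕ) (hL : 0 < L)
    (N : ℝ) (hN : 0 < N)
    (hS : 0 < Nat.card {v : Fin l → ℕ |
        (∀ i, 0 < v i) ∧ ∏ i, (v i : ℝ) ^ ((a i : ℝ) / (b i : ℝ)) ≤ N}) :
    (Nat.card {v : Fin l → ℕ | (∀ i, 0 < v i) ∧
        ∏ i, ((Function.update v i₀ (L ^ (b i₀) * v i₀)) i : ℝ) ^ ((a i : ℝ) / (b i : ℝ)) ≤ N} : ℝ) /
      (Nat.card {v : Fin l → ℕ |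
        (∀ i, 0 < v i) ∧ ∏ i, (v i : ℝ) ^ ((a i : ℝ) / (b i : ℝ)) ≤ N} : ℝ)
      ≤ 1 / (L : ℝ) ^ (b i₀) := by
  classical
  set M := L ^ (b i₀) with hMdef
  have hM : 0 < M := pow_pos hL _
  set S : Set (Fin l → ℕ) := {v : Fin l → ℕ |
        (∀ i, 0 < v i) ∧ ∏ i, (v i : ℝ) ^ ((a i : ℝ) / (b i : ℝ)) ≤ N} with hSdef
  set T : Set (Fin l → ℕ) := {v : Fin l → ℕ | (∀ i, 0 < v i) ∧
        ∏ i, ((Function.update v i₀ (M * v i₀)) i : ℝ) ^ ((a i : ℝ) / (b i : ℝ)) ≤ N} with hTdef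
  have hmem : ∀ v ∈ T, ∀ k : ℕ, 0 < k → k ≤ M * v i₀ → Function.update v i₀ k ∈ S := by
    rintro v ⟨hpos, hprod⟩ k hk hkle
    constructor
    · intro j
      rcases eq_or_ne j i₀ with rfl | hj
      · simpa using hk
      · simpa [Function.update_apply, hj] using hpos j
    · calc ∏ i, ((Function.update v i₀ k i : ℕ) : ℝ) ^ ((a i : ℝ) / (b i : ℝ))
          ≤ ∏ i, ((Function.update v i₀ (M * v i₀) i : ℕ) : ℝ) ^ ((a i : ℝ) / (b i : ℝ)) := by
            apply Finset.prod_le_prod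
            · intro i _; positivity
            · intro i _
              rcases eq_or_ne i i₀ with rfl | hi
              · simp only [Function.update_self]
                exact Real.rpow_le_rpow (by positivity) (by exact_mod_cast hkle) (by positivity)
              · simp [Function.update_apply, hi]
        _ ≤ N := hprod
  have hginj : ∀ (v v' : Fin l → ℕ), (∀ i, 0 < v i) → (∀ i, 0 < v' i) →
      ∀ j j' : ℕ, j < M → j' < M →
      Function.update v i₀ (M * v i₀ - j) = Function.update v' i₀ (M * v' i₀ - j') →
      v = v' ∧ j = j' := by
    intro v v' hv hv' j j' hj hj' heq
    have hxi : ∀ x, x ≠ i₀ → v x = v' x := by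
      intro x hx
      have := congrFun heq x
      simpa [Function.update_apply, hx] using this
    have hi0 : M * v i₀ - j = M * v' i₀ - j' := by
      have := congrFun heq i₀
      simpa using this
    obtain ⟨h1, h2⟩ := keyrec M (v i₀) (v' i₀) j j' (hv i₀) (hv' i₀) hj hj' hi0
    refine ⟨funext fun x => ?_, h2⟩
    rcases eq_or_ne x i₀ with rfl | hx
    · exact h1
    · exact hxi x hx
  haveI hSfin : Finite S := Nat.finite_of_card_ne_zero hS.ne'
  let g : T × Fin M → S := fun p =>
    ⟨Function.update (p.1 : Fin l → ℕ) i₀ (M * (p.1 : Fin l → ℕ) i₀ - p.2),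
     hmem _ p.1.2 _
      (by
        have h1 := p.1.2.1 i₀
        have h2 := p.2.2
        have h3 : M ≤ M * (p.1 : Fin l → ℕ) i₀ := Nat.le_mul_of_pos_right M (p.1.2.1 i₀)
        omega)
      (Nat.sub_le _ _)⟩
  have hg : Function.Injective g := by
    rintro ⟨⟨v, hv⟩, ⟨j, hjlt⟩⟩ ⟨⟨v', hv'⟩, ⟨j', hj'lt⟩⟩ h
    simp only [g, Subtype.mk_eq_mk] at h
    obtain ⟨h1, h2⟩ := hginj v v' hv.1 hv'.1 j j' hjlt hj'lt h
    simp only [Prod.mk.injEq, Subtype.mk.injEq, Fin.mk.injEq]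
    exact ⟨h1, h2⟩
  haveI hTfin : Finite T :=
    Finite.of_injective (fun v : T => g (v, ⟨0, hM⟩))
      (fun x y h => by
        have := hg h
        exact (Prod.ext_iff.mp this).1)
  have hcard : Nat.card T * M ≤ Nat.card S := by
    have := Nat.card_le_card_of_injective g hg
    simpa [Nat.card_prod] using this
  have hSpos : (0 : ℝ) < Nat.card S := by exact_mod_cast hS
  have hMpos : (0 : ℝ) < (L : ℝ) ^ (b i₀) := by positivity
  rw [div_le_div_iff₀ hSpos hMpos, one_mul]
  calc (Nat.card T : ℝ) * (L : ℝ) ^ (b i₀) = ((Nat.card T * M : ℕ) : ℝ) := by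
        push_cast [hMdef]; ring
    _ ≤ (Nat.card S : ℝ) := by exact_mod_cast hcard
end

section
/- Let (s_n) be a sequence of positive reals and suppose there exist ε ∈ (0,1), P₀ > 0, and a finite constant C such that for all P and all Lebesgue measurable E ⊆ ℝ, the upper density of {t ∈ ℝ : max_{P₀ ≤ N ≤ P} (1/N)∑_{n≤N} 1_E(s_n + t) ≥ 1−ε} is at most C times the upper density of E. Then for every measure-preserving flow (U_t) on a probability space (X̃, β, 𝔪) and every Ẽ ∈ β, 𝔪{x : max_{P₀ ≤ N ≤ P} (1/N)∑_{n≤N} 1_{Ẽ}(U_{s_n} x) ≥ 1−ε} ≤ C·𝔪(Ẽ). -/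
/-!
Transference from the line to the flow. For each `x`, the set of times `t` at which `U t x` lies
in the maximal set of the flow is exactly the maximal set on the line built from the visit times
`{t | U t x ∈ E}`, so the hypothesis bounds its upper density pointwise in `x`. Averaging over `x`:
by Fubini and measure preservation, the measure of a set is at most the mean upper density of its
visit times, and conversely the mean upper density of the visit times of `E` is at most `μ E`.
The latter is a maximal inequality: the upper density is invariant along orbits, so the times in
`[0, L]` at which the orbit visits `E` with nearly its upper frequency over some window `[t, t + J]`
can be covered greedily by such windows.
-/

open MeasureTheory

/-- Upper density of a measurable subset of `ℝ`:
`limsup_{J→∞} (1/J)·λ(B ∩ [0,J])`. -/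
noncomputable def upperDensity (B : Set ℝ) : ℝ :=
  Filter.limsup (fun J : ℕ => (volume (B ∩ Set.Icc (0 : ℝ) J)).toReal / J) Filter.atTop

open Filter Set
open scoped ENNReal

lemma ENNReal.tendsto_div_natCast_atTop_nhds_zero {K : ℝ≥0∞} (hK : K ≠ ⊤) :
    Tendsto (fun L : ℕ => K / L) atTop (nhds 0) := by
  simpa [div_eq_mul_inv] using
    ENNReal.Tendsto.const_mul ENNReal.tendsto_inv_nat_nhds_zero (.inr hK)

lemma limsup_div_natCast_le_of_le_add {a b : ℕ → ℝ≥0∞} {τ : ℝ≥0∞} (hτ : τ ≠ ⊤)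
    (h : ∀ J, a J ≤ b J + τ) :
    limsup (fun J : ℕ => a J / J) atTop ≤ limsup (fun J : ℕ => b J / J) atTop := by
  calc limsup (fun J : ℕ => a J / J) atTop
      ≤ limsup ((fun J : ℕ => b J / J) + fun J : ℕ => τ / J) atTop :=
        limsup_le_limsup (.of_forall fun J => by
          simpa only [Pi.add_apply, ENNReal.add_div] using ENNReal.div_le_div_right (h J) _)
    _ = limsup (fun J : ℕ => b J / J) atTop :=
        ENNReal.limsup_add_of_right_tendsto_zero
          (ENNReal.tendsto_div_natCast_atTop_nhds_zero hτ) _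

lemma ENNReal.le_of_forall_mul_natCast_le_add {a b K : ℝ≥0∞} (hK : K ≠ ⊤)
    (h : ∀ L : ℕ, a * L ≤ b * L + K) : a ≤ b := by
  have hL : ∀ᶠ L : ℕ in atTop, a ≤ b + K / L := by
    filter_upwards [eventually_ne_atTop 0] with L hL0
    have hL0' : (L : ℝ≥0∞) ≠ 0 := by exact_mod_cast hL0
    rw [← ENNReal.mul_le_mul_iff_left hL0' (ENNReal.natCast_ne_top L), add_mul,
      ENNReal.div_mul_cancel hL0' (ENNReal.natCast_ne_top L)]
    exact h L
  simpa using ge_of_tendsto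
    (tendsto_const_nhds.add (ENNReal.tendsto_div_natCast_atTop_nhds_zero hK)) hL

lemma measure_inter_le_add_sdiff {α : Type*} [MeasurableSpace α] (μ : Measure α)
    (B s s' : Set α) : μ (B ∩ s) ≤ μ (B ∩ s') + μ (s \ s') := by
  refine (measure_mono fun x (hx : x ∈ B ∩ s) => ?_).trans (measure_union_le _ _)
  by_cases hs' : x ∈ s'
  exacts [.inl ⟨hx.1, hs'⟩, .inr ⟨hx.2, hs'⟩]

lemma volume_inter_Ioc_add_volume_inter_Ioc (B : Set ℝ) {a b c : ℝ} (hab : a ≤ b)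
    (hbc : b ≤ c) :
    volume (B ∩ Ioc a b) + volume (B ∩ Ioc b c) = volume (B ∩ Ioc a c) := by
  rw [← measure_inter_add_sdiff (B ∩ Ioc a c) measurableSet_Iic (t := Iic b)]
  congr 2 <;> ext x <;> simp only [mem_inter_iff, mem_Ioc, mem_Iic, Set.mem_sdiff] <;> grind

lemma volume_preimage_add_inter_Icc (B : Set ℝ) (t a : ℝ) :
    volume ((· + t) ⁻¹' B ∩ Icc 0 a) = volume (B ∩ Icc t (t + a)) := by
  rw [← measure_preimage_add_right volume t (B ∩ Icc t (t + a)), preimage_inter,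
    preimage_add_const_Icc]
  simp

/-- The `ℝ≥0∞`-valued upper density, whose `limsup` needs no boundedness side conditions and
which can be integrated with `∫⁻`. -/
noncomputable def eUpperDensity (B : Set ℝ) : ℝ≥0∞ :=
  limsup (fun J : ℕ => volume (B ∩ Icc (0 : ℝ) J) / J) atTop

lemma volume_inter_Icc_zero_div_le_one (B : Set ℝ) (J : ℕ) :
    volume (B ∩ Icc (0 : ℝ) J) / J ≤ 1 := by
  refine ENNReal.div_le_of_le_mul ?_
  calc volume (B ∩ Icc (0 : ℝ) J) ≤ volume (Icc (0 : ℝ) J) := measure_mono inter_subset_right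
    _ = 1 * J := by simp

lemma eUpperDensity_le_one (B : Set ℝ) : eUpperDensity B ≤ 1 :=
  limsup_le_of_le (h := .of_forall (volume_inter_Icc_zero_div_le_one B))

lemma upperDensity_eq_toReal (B : Set ℝ) : upperDensity B = (eUpperDensity B).toReal := by
  rw [upperDensity, eUpperDensity, ← ENNReal.limsup_toReal_eq ENNReal.one_ne_top
    (.of_forall (volume_inter_Icc_zero_div_le_one B))]
  simp [ENNReal.toReal_div]

lemma eUpperDensity_le_of_upperDensity_le {A B : Set ℝ} {C : ℝ}
    (h : upperDensity A ≤ C * upperDensity B) :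
    eUpperDensity A ≤ ENNReal.ofReal C * eUpperDensity B := by
  have hfin : ∀ D, eUpperDensity D ≠ ⊤ := fun D => ne_top_of_le_ne_top ENNReal.one_ne_top
    (eUpperDensity_le_one D)
  rw [upperDensity_eq_toReal, upperDensity_eq_toReal] at h
  calc eUpperDensity A = ENNReal.ofReal (eUpperDensity A).toReal :=
        (ENNReal.ofReal_toReal (hfin A)).symm
    _ ≤ ENNReal.ofReal (C * (eUpperDensity B).toReal) := ENNReal.ofReal_le_ofReal h
    _ = ENNReal.ofReal C * eUpperDensity B := by
      rw [ENNReal.ofReal_mul' ENNReal.toReal_nonneg, ENNReal.ofReal_toReal (hfin B)]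

lemma eUpperDensity_preimage_add (B : Set ℝ) {t : ℝ} (ht : 0 ≤ t) :
    eUpperDensity ((· + t) ⁻¹' B) = eUpperDensity B := by
  have hvol : ∀ a b : ℝ, b - a ≤ t → volume (Icc a b) ≤ ENNReal.ofReal t := fun a b hab => by
    simpa using ENNReal.ofReal_le_ofReal hab
  unfold eUpperDensity
  simp_rw [volume_preimage_add_inter_Icc]
  refine le_antisymm
    (limsup_div_natCast_le_of_le_add (ENNReal.ofReal_ne_top (r := t)) fun J => ?_)
    (limsup_div_natCast_le_of_le_add (ENNReal.ofReal_ne_top (r := t)) fun J => ?_)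
  · refine (measure_inter_le_add_sdiff _ _ _ (Icc 0 (J : ℝ))).trans (add_le_add le_rfl ?_)
    refine (measure_mono fun x (hx : x ∈ Icc t (t + J) \ Icc 0 (J : ℝ)) => ?_).trans
      (hvol J (t + J) (by linarith))
    simp only [Set.mem_sdiff, mem_Icc] at hx ⊢
    grind
  · refine (measure_inter_le_add_sdiff _ _ _ (Icc t (t + J))).trans (add_le_add le_rfl ?_)
    refine (measure_mono fun x (hx : x ∈ Icc 0 (J : ℝ) \ Icc t (t + J)) => ?_).trans
      (hvol 0 t (by linarith))
    simp only [Set.mem_sdiff, mem_Icc] at hx ⊢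
    grind

section Covering

variable {B S : Set ℝ} {c : ℝ≥0∞} {L M : ℕ}

/-- One greedy step: take `t ∈ S ∩ [r, ∞)` within `η` of the infimum and jump past its
window `[t, t + J]`. -/
lemma exists_covering_step (hc : c ≤ 1)
    (hS : ∀ t ∈ S, t ≤ L ∧ ∃ J : ℕ, 1 ≤ J ∧ J ≤ M ∧ c * J ≤ volume (B ∩ Icc t (t + J)))
    {r η : ℝ} (hη : 0 < η) (hne : (S ∩ Ici r).Nonempty) :
    ∃ r', r + 1 ≤ r' ∧ r' ≤ L + M ∧
      c * volume (S ∩ Ici r)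
        ≤ ENNReal.ofReal η + volume (B ∩ Ioc r r') + c * volume (S ∩ Ici r') := by
  obtain ⟨t, ⟨htS, hrt : r ≤ t⟩, htv⟩ := Real.lt_sInf_add_pos hne hη
  obtain ⟨htL, J, hJ1, hJM, hcJ⟩ := hS t htS
  have hJ1' : (1 : ℝ) ≤ J := by exact_mod_cast hJ1
  have hJM' : (J : ℝ) ≤ M := by exact_mod_cast hJM
  have hbdd : BddBelow (S ∩ Ici r) := ⟨r, fun u hu => hu.2⟩
  have hcover : S ∩ Ici r ⊆ Icc (sInf (S ∩ Ici r)) (t + J) ∪ (S ∩ Ici (t + J)) := fun u hu =>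
    (le_or_gt u (t + J)).imp (fun h => ⟨csInf_le hbdd hu, h⟩) fun h => ⟨hu.1, h.le⟩
  have hhead : c * volume (Icc (sInf (S ∩ Ici r)) (t + J))
      ≤ ENNReal.ofReal η + volume (B ∩ Ioc r (t + J)) := by
    have hlen : volume (Icc (sInf (S ∩ Ici r)) (t + J)) ≤ ENNReal.ofReal η + J := by
      rw [Real.volume_Icc, ← ENNReal.ofReal_natCast, ← ENNReal.ofReal_add hη.le J.cast_nonneg]
      exact ENNReal.ofReal_le_ofReal (by linarith)
    have hB : volume (B ∩ Icc t (t + J)) ≤ volume (B ∩ Ioc r (t + J)) := by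
      rw [measure_congr (ae_eq_set_inter (ae_eq_refl B) Ioc_ae_eq_Icc).symm]
      exact measure_mono (inter_subset_inter_right _ (Ioc_subset_Ioc_left hrt))
    calc c * volume (Icc (sInf (S ∩ Ici r)) (t + J)) ≤ c * (ENNReal.ofReal η + J) := by gcongr
      _ = c * ENNReal.ofReal η + c * J := mul_add _ _ _
      _ ≤ ENNReal.ofReal η + volume (B ∩ Ioc r (t + J)) :=
        add_le_add (mul_le_of_le_one_left' hc) (hcJ.trans hB)
  refine ⟨t + J, by linarith, by linarith, ?_⟩
  calc c * volume (S ∩ Ici r)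
      ≤ c * (volume (Icc (sInf (S ∩ Ici r)) (t + J)) + volume (S ∩ Ici (t + J))) := by
        gcongr; exact (measure_mono hcover).trans (measure_union_le _ _)
    _ = c * volume (Icc (sInf (S ∩ Ici r)) (t + J)) + c * volume (S ∩ Ici (t + J)) :=
        mul_add _ _ _
    _ ≤ _ := by gcongr

lemma mul_volume_inter_Ici_le_add_of_covering (hc : c ≤ 1)
    (hS : ∀ t ∈ S, t ≤ L ∧ ∃ J : ℕ, 1 ≤ J ∧ J ≤ M ∧ c * J ≤ volume (B ∩ Icc t (t + J)))
    {η : ℝ} (hη : 0 < η) (k : ℕ) :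
    ∀ r : ℝ, L < r + k →
      c * volume (S ∩ Ici r) ≤ volume (B ∩ Ioc r (L + M)) + k * ENNReal.ofReal η := by
  induction k with
  | zero =>
    intro r hr
    have hempty : S ∩ Ici r = ∅ := eq_empty_of_forall_notMem fun t ⟨htS, (hrt : r ≤ t)⟩ => by
      have := (hS t htS).1
      push_cast at hr
      linarith
    simp [hempty]
  | succ k ih =>
    intro r hr
    rcases (S ∩ Ici r).eq_empty_or_nonempty with hempty | hne
    · simp [hempty]
    obtain ⟨r', hrr', hr'Q, hstep⟩ := exists_covering_step hc hS hη hne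
    calc c * volume (S ∩ Ici r)
        ≤ ENNReal.ofReal η + volume (B ∩ Ioc r r')
          + (volume (B ∩ Ioc r' (L + M)) + k * ENNReal.ofReal η) :=
          hstep.trans (add_le_add le_rfl (ih r' (by push_cast at hr; linarith)))
      _ = (volume (B ∩ Ioc r r') + volume (B ∩ Ioc r' (L + M)))
          + (k + 1 : ℕ) * ENNReal.ofReal η := by push_cast; ring
      _ = volume (B ∩ Ioc r (L + M)) + (k + 1 : ℕ) * ENNReal.ofReal η := by
          rw [volume_inter_Ioc_add_volume_inter_Ioc B (by linarith) hr'Q]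

lemma mul_volume_le_volume_inter_of_covering (hc : c ≤ 1)
    (hS : ∀ t ∈ S, 0 ≤ t ∧ t ≤ L ∧
      ∃ J : ℕ, 1 ≤ J ∧ J ≤ M ∧ c * J ≤ volume (B ∩ Icc t (t + J))) :
    c * volume S ≤ volume (B ∩ Icc 0 (L + M)) := by
  refine ENNReal.le_of_forall_pos_le_add fun ε hε _ => ?_
  have hη : 0 < (ε : ℝ) / (L + 1) := by positivity
  have hS0 : S ∩ Ici 0 = S := inter_eq_left.2 fun t ht => (hS t ht).1
  -- `L + 1` greedy steps exhaust `S ⊆ [0, L]`, each losing `η = ε / (L + 1)`.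
  have key := mul_volume_inter_Ici_le_add_of_covering hc (fun t ht => (hS t ht).2) hη (L + 1) 0
    (by push_cast; linarith)
  rw [hS0] at key
  refine key.trans (add_le_add (measure_mono (inter_subset_inter_right _ Ioc_subset_Icc_self))
    (le_of_eq ?_))
  rw [← ENNReal.ofReal_natCast, ← ENNReal.ofReal_mul (by positivity)]
  push_cast
  rw [mul_div_cancel₀ _ (by positivity), ENNReal.ofReal_coe_nnreal]

end Covering

section Flow

variable {X : Type*} {U : ℝ → X → X}

lemma setOf_flow_mem_shift (hUadd : ∀ t u, U (t + u) = U t ∘ U u) (D : Set X) (x : X)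
    (t : ℝ) :
    {w : ℝ | U w (U t x) ∈ D} = (· + t) ⁻¹' {w : ℝ | U w x ∈ D} := by
  ext w
  simp [hUadd]

lemma eUpperDensity_setOf_flow_mem_shift (hUadd : ∀ t u, U (t + u) = U t ∘ U u) (D : Set X)
    (x : X) {t : ℝ} (ht : 0 ≤ t) :
    eUpperDensity {w : ℝ | U w (U t x) ∈ D} = eUpperDensity {w : ℝ | U w x ∈ D} := by
  rw [setOf_flow_mem_shift hUadd, eUpperDensity_preimage_add _ ht]

variable [MeasurableSpace X] {μ : Measure X}

lemma measurableSet_setOf_flow_mem (hUmeas : Measurable fun p : ℝ × X => U p.1 p.2)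
    {D : Set X} (hD : MeasurableSet D) (x : X) : MeasurableSet {t : ℝ | U t x ∈ D} :=
  hUmeas.comp (measurable_id.prodMk measurable_const) hD

lemma measurable_volume_setOf_flow_mem_inter (hUmeas : Measurable fun p : ℝ × X => U p.1 p.2)
    {D : Set X} (hD : MeasurableSet D) {I : Set ℝ} (hI : MeasurableSet I) :
    Measurable fun x => volume ({t : ℝ | U t x ∈ D} ∩ I) :=
  measurable_measure_prodMk_left (s := {p : X × ℝ | U p.2 p.1 ∈ D ∧ p.2 ∈ I})
    ((hUmeas.comp measurable_swap hD).inter (measurable_snd hI))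

lemma lintegral_volume_setOf_flow_mem_inter [SFinite μ]
    (hUmp : ∀ t, MeasurePreserving (U t) μ μ) (hUmeas : Measurable fun p : ℝ × X => U p.1 p.2)
    {D : Set X} (hD : MeasurableSet D) {I : Set ℝ} (hI : MeasurableSet I) :
    ∫⁻ x, volume ({t : ℝ | U t x ∈ D} ∩ I) ∂μ = volume I * μ D := by
  have hs : MeasurableSet {p : X × ℝ | U p.2 p.1 ∈ D ∧ p.2 ∈ I} :=
    (hUmeas.comp measurable_swap hD).inter (measurable_snd hI)
  have hslice : ∀ t, μ ((·, t) ⁻¹' {p : X × ℝ | U p.2 p.1 ∈ D ∧ p.2 ∈ I})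
      = I.indicator (fun _ => μ D) t := by
    intro t
    by_cases ht : t ∈ I
    · rw [indicator_of_mem ht, ← (hUmp t).measure_preimage hD.nullMeasurableSet]
      congr 1 with x
      simp [ht]
    · simp [ht]
  calc ∫⁻ x, volume ({t : ℝ | U t x ∈ D} ∩ I) ∂μ
      = μ.prod volume {p : X × ℝ | U p.2 p.1 ∈ D ∧ p.2 ∈ I} := (Measure.prod_apply hs).symm
    _ = ∫⁻ t, I.indicator (fun _ => μ D) t := by
      rw [Measure.prod_apply_symm hs]; simp_rw [hslice]
    _ = volume I * μ D := by rw [lintegral_indicator_const hI, mul_comm]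

lemma measurable_eUpperDensity_setOf_flow_mem (hUmeas : Measurable fun p : ℝ × X => U p.1 p.2)
    {D : Set X} (hD : MeasurableSet D) :
    Measurable fun x => eUpperDensity {t : ℝ | U t x ∈ D} :=
  .limsup fun _ => (measurable_volume_setOf_flow_mem_inter hUmeas hD measurableSet_Icc).div_const _

lemma measure_le_lintegral_eUpperDensity [IsFiniteMeasure μ]
    (hUmp : ∀ t, MeasurePreserving (U t) μ μ) (hUmeas : Measurable fun p : ℝ × X => U p.1 p.2)
    {D : Set X} (hD : MeasurableSet D) :
    μ D ≤ ∫⁻ x, eUpperDensity {t : ℝ | U t x ∈ D} ∂μ := by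
  have hmean : ∀ᶠ J : ℕ in atTop,
      ∫⁻ x, volume ({t : ℝ | U t x ∈ D} ∩ Icc 0 (J : ℝ)) / J ∂μ = μ D := by
    filter_upwards [eventually_ne_atTop 0] with J hJ
    simp_rw [div_eq_mul_inv]
    rw [lintegral_mul_const _
        (measurable_volume_setOf_flow_mem_inter hUmeas hD measurableSet_Icc),
      lintegral_volume_setOf_flow_mem_inter hUmp hUmeas hD measurableSet_Icc]
    simp [mul_comm, ← mul_assoc, ENNReal.mul_inv_cancel, hJ]
  calc μ D = limsup (fun J : ℕ => ∫⁻ x, volume ({t : ℝ | U t x ∈ D} ∩ Icc 0 (J : ℝ)) / J ∂μ)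
        atTop := by rw [limsup_congr hmean, limsup_const]
    _ ≤ ∫⁻ x, eUpperDensity {t : ℝ | U t x ∈ D} ∂μ :=
      limsup_lintegral_le 1
        (fun J => (measurable_volume_setOf_flow_mem_inter hUmeas hD measurableSet_Icc).div_const _)
        (fun J => .of_forall fun _ => volume_inter_Icc_zero_div_le_one _ J) (by simp)

end Flow

section DenseVisits

variable {X : Type*}

def denseVisitSet (U : ℝ → X → X) (E : Set X) (c : X → ℝ≥0∞) (M : ℕ) : Set X :=
  {y | ∃ J : ℕ, 1 ≤ J ∧ J ≤ M ∧ c y * J ≤ volume ({t : ℝ | U t y ∈ E} ∩ Icc 0 (J : ℝ))}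

variable {U : ℝ → X → X} {E : Set X} {c : X → ℝ≥0∞}

lemma monotone_denseVisitSet : Monotone (denseVisitSet U E c) :=
  fun _ _ hMM' _ ⟨J, hJ1, hJM, hJ⟩ => ⟨J, hJ1, hJM.trans hMM', hJ⟩

lemma iUnion_denseVisitSet
    (hc : ∀ y, c y = 0 ∨ c y < eUpperDensity {t : ℝ | U t y ∈ E}) :
    ⋃ M, denseVisitSet U E c M = univ := by
  refine eq_univ_of_forall fun y => mem_iUnion.2 ?_
  rcases hc y with h0 | hlt
  · exact ⟨1, 1, le_rfl, le_rfl, by simp [h0]⟩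
  obtain ⟨J, hJ, hJ1⟩ :=
    ((frequently_lt_of_lt_limsup (by isBoundedDefault) hlt).and_eventually
      (eventually_ge_atTop 1)).exists
  have hJ0 : (J : ℝ≥0∞) ≠ 0 := by exact_mod_cast (Nat.one_le_iff_ne_zero.1 hJ1)
  exact ⟨J, J, hJ1, le_rfl,
    (ENNReal.le_div_iff_mul_le (.inl hJ0) (.inl (ENNReal.natCast_ne_top J))).1 hJ.le⟩

lemma mul_natCast_le_volume_add_volume_compl_denseVisitSet
    (hUadd : ∀ t u, U (t + u) = U t ∘ U u) (hc1 : ∀ y, c y ≤ 1)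
    (hinv : ∀ y t, 0 ≤ t → c (U t y) = c y) (x : X) (L M : ℕ) :
    c x * L ≤ volume ({t : ℝ | U t x ∈ E} ∩ Icc 0 (L + M : ℝ))
      + volume ({t : ℝ | U t x ∈ (denseVisitSet U E c M)ᶜ} ∩ Icc 0 (L : ℝ)) := by
  set S := {t : ℝ | t ∈ Icc 0 (L : ℝ) ∧ U t x ∈ denseVisitSet U E c M}
  have hS : c x * volume S ≤ volume ({t : ℝ | U t x ∈ E} ∩ Icc 0 (L + M : ℝ)) := by
    refine mul_volume_le_volume_inter_of_covering (hc1 x) ?_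
    rintro t ⟨⟨ht0, htL⟩, J, hJ1, hJM, hJ⟩
    refine ⟨ht0, htL, J, hJ1, hJM, ?_⟩
    rwa [hinv x t ht0, setOf_flow_mem_shift hUadd, volume_preimage_add_inter_Icc] at hJ
  have hsplit : (L : ℝ≥0∞) ≤ volume S
      + volume ({t : ℝ | U t x ∈ (denseVisitSet U E c M)ᶜ} ∩ Icc 0 (L : ℝ)) := by
    calc (L : ℝ≥0∞) = volume (Icc 0 (L : ℝ)) := by simp
      _ ≤ _ := by
        refine (measure_mono fun t ht => ?_).trans (measure_union_le _ _)
        by_cases h : U t x ∈ denseVisitSet U E c M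
        exacts [.inl ⟨ht, h⟩, .inr ⟨h, ht⟩]
  calc c x * L ≤ c x * (volume S
        + volume ({t : ℝ | U t x ∈ (denseVisitSet U E c M)ᶜ} ∩ Icc 0 (L : ℝ))) := by gcongr
    _ = c x * volume S
        + c x * volume ({t : ℝ | U t x ∈ (denseVisitSet U E c M)ᶜ} ∩ Icc 0 (L : ℝ)) :=
      mul_add _ _ _
    _ ≤ _ := add_le_add hS (mul_le_of_le_one_left' (hc1 x))

variable [MeasurableSpace X] {μ : Measure X}

lemma measurableSet_denseVisitSet (hUmeas : Measurable fun p : ℝ × X => U p.1 p.2)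
    (hE : MeasurableSet E) (hc : Measurable c) (M : ℕ) :
    MeasurableSet (denseVisitSet U E c M) := by
  simp only [denseVisitSet, ofPred_exists, ofPred_and]
  exact .iUnion fun J => (MeasurableSet.const _).inter <| (MeasurableSet.const _).inter <|
    measurableSet_le (hc.mul_const _)
      (measurable_volume_setOf_flow_mem_inter hUmeas hE measurableSet_Icc)

lemma lintegral_le_measure_add_measure_compl_denseVisitSet [IsFiniteMeasure μ]
    (hUmp : ∀ t, MeasurePreserving (U t) μ μ) (hUadd : ∀ t u, U (t + u) = U t ∘ U u)
    (hUmeas : Measurable fun p : ℝ × X => U p.1 p.2) (hE : MeasurableSet E)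
    (hc : Measurable c) (hc1 : ∀ y, c y ≤ 1) (hinv : ∀ y t, 0 ≤ t → c (U t y) = c y) (M : ℕ) :
    ∫⁻ x, c x ∂μ ≤ μ E + μ (denseVisitSet U E c M)ᶜ := by
  have hA := (measurableSet_denseVisitSet hUmeas hE hc M).compl
  refine ENNReal.le_of_forall_mul_natCast_le_add (K := M * μ E)
    (ENNReal.mul_ne_top (ENNReal.natCast_ne_top M) (measure_ne_top μ E)) fun L => ?_
  calc (∫⁻ x, c x ∂μ) * L = ∫⁻ x, c x * L ∂μ := (lintegral_mul_const _ hc).symm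
    _ ≤ ∫⁻ x, (volume ({t : ℝ | U t x ∈ E} ∩ Icc 0 (L + M : ℝ))
          + volume ({t : ℝ | U t x ∈ (denseVisitSet U E c M)ᶜ} ∩ Icc 0 (L : ℝ))) ∂μ :=
      lintegral_mono fun x =>
        mul_natCast_le_volume_add_volume_compl_denseVisitSet hUadd hc1 hinv x L M
    _ = volume (Icc 0 (L + M : ℝ)) * μ E
          + volume (Icc 0 (L : ℝ)) * μ (denseVisitSet U E c M)ᶜ := by
      rw [lintegral_add_left
          (measurable_volume_setOf_flow_mem_inter hUmeas hE measurableSet_Icc),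
        lintegral_volume_setOf_flow_mem_inter hUmp hUmeas hE measurableSet_Icc,
        lintegral_volume_setOf_flow_mem_inter hUmp hUmeas hA measurableSet_Icc]
    _ = (μ E + μ (denseVisitSet U E c M)ᶜ) * L + M * μ E := by
      rw [Real.volume_Icc, Real.volume_Icc, sub_zero, sub_zero, ENNReal.ofReal_add L.cast_nonneg
        M.cast_nonneg, ENNReal.ofReal_natCast, ENNReal.ofReal_natCast]
      ring

lemma lintegral_eUpperDensity_le_measure [IsFiniteMeasure μ]
    (hUmp : ∀ t, MeasurePreserving (U t) μ μ) (hUadd : ∀ t u, U (t + u) = U t ∘ U u)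
    (hUmeas : Measurable fun p : ℝ × X => U p.1 p.2) (hE : MeasurableSet E) :
    ∫⁻ x, eUpperDensity {t : ℝ | U t x ∈ E} ∂μ ≤ μ E := by
  set F := fun x => eUpperDensity {t : ℝ | U t x ∈ E}
  have hF : Measurable F := measurable_eUpperDensity_setOf_flow_mem hUmeas hE
  -- Lowering `F` by `δ` puts every point into some `denseVisitSet`.
  have htrunc : ∀ δ ≠ 0, ∫⁻ x, F x - δ ∂μ ≤ μ E := by
    intro δ hδ
    have hc : Measurable fun x => F x - δ := hF.sub measurable_const
    have hvisit : ∀ y, F y - δ = 0 ∨ F y - δ < F y := fun y => by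
      by_cases hy : F y ≤ δ
      · exact .inl (tsub_eq_zero_of_le hy)
      · exact .inr (ENNReal.sub_lt_self (ne_top_of_le_ne_top ENNReal.one_ne_top
          (eUpperDensity_le_one _)) (pos_of_gt (not_le.1 hy)).ne' hδ)
    have hcompl : Tendsto (fun M => μ (denseVisitSet U E (F · - δ) M)ᶜ) atTop (nhds 0) := by
      have := tendsto_measure_iInter_atTop (μ := μ)
        (fun M => (measurableSet_denseVisitSet hUmeas hE hc M).compl
          |>.nullMeasurableSet)
        (fun _ _ h => compl_subset_compl.2 (monotone_denseVisitSet h)) ⟨0, measure_ne_top _ _⟩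
      rwa [← compl_iUnion, iUnion_denseVisitSet hvisit, compl_univ, measure_empty] at this
    refine ge_of_tendsto' (by simpa using tendsto_const_nhds.add hcompl) fun M => ?_
    exact lintegral_le_measure_add_measure_compl_denseVisitSet hUmp hUadd hUmeas hE hc
      (fun y => tsub_le_self.trans (eUpperDensity_le_one _))
      (fun y t ht => by simp only [F, eUpperDensity_setOf_flow_mem_shift hUadd E y ht]) M
  have hslack : ∀ n : ℕ, ∫⁻ x, F x ∂μ ≤ μ E + (n : ℝ≥0∞)⁻¹ * μ univ := fun n => calc
    ∫⁻ x, F x ∂μ ≤ ∫⁻ x, (F x - (n : ℝ≥0∞)⁻¹) + (n : ℝ≥0∞)⁻¹ ∂μ :=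
        lintegral_mono fun _ => le_tsub_add
    _ = ∫⁻ x, F x - (n : ℝ≥0∞)⁻¹ ∂μ + (n : ℝ≥0∞)⁻¹ * μ univ := by
        rw [lintegral_add_right _ measurable_const, lintegral_const]
    _ ≤ μ E + (n : ℝ≥0∞)⁻¹ * μ univ := by
        gcongr; exact htrunc _ (ENNReal.inv_ne_zero.2 (ENNReal.natCast_ne_top n))
  have hlim : Tendsto (fun n : ℕ => μ E + (n : ℝ≥0∞)⁻¹ * μ univ) atTop (nhds (μ E)) := by
    simpa using tendsto_const_nhds.add
      (ENNReal.Tendsto.mul_const ENNReal.tendsto_inv_nat_nhds_zero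
        (.inr (measure_ne_top μ univ)))
  exact ge_of_tendsto' hlim hslack

end DenseVisits

theorem stmt14_general (s : ℕ → ℝ)
    (ε : ℝ) (P₀ : ℕ) (C : ℝ)
    (h : ∀ P : ℕ, ∀ E : Set ℝ, MeasurableSet E →
      upperDensity {t : ℝ | ∃ N : ℕ, P₀ ≤ N ∧ N ≤ P ∧
          1 - ε ≤ (1 / (N : ℝ)) *
            ∑ n ∈ Finset.Icc 1 N, Set.indicator E (fun _ => (1 : ℝ)) (s n + t)}
        ≤ C * upperDensity E)
    (X : Type*) [MeasurableSpace X] (μ : Measure X) [IsProbabilityMeasure μ]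
    (U : ℝ → X → X) (hUmp : ∀ t, MeasurePreserving (U t) μ μ)
    (hUadd : ∀ t u, U (t + u) = U t ∘ U u)
    (hUmeas : Measurable fun p : ℝ × X => U p.1 p.2)
    (E : Set X) (hE : MeasurableSet E) (P : ℕ) :
    μ {x : X | ∃ N : ℕ, P₀ ≤ N ∧ N ≤ P ∧
        1 - ε ≤ (1 / (N : ℝ)) *
          ∑ n ∈ Finset.Icc 1 N, Set.indicator E (fun _ => (1 : ℝ)) (U (s n) x)}
      ≤ ENNReal.ofReal C * μ E := by
  set G := {x : X | ∃ N : ℕ, P₀ ≤ N ∧ N ≤ P ∧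
    1 - ε ≤ (1 / (N : ℝ)) *
      ∑ n ∈ Finset.Icc 1 N, Set.indicator E (fun _ => (1 : ℝ)) (U (s n) x)}
  have hG : MeasurableSet G := by
    simp only [G, ofPred_exists, ofPred_and]
    exact .iUnion fun N => (MeasurableSet.const _).inter <| (MeasurableSet.const _).inter <|
      measurableSet_le measurable_const <| (Finset.measurable_sum _ fun n _ =>
        (measurable_const.indicator hE).comp (hUmp (s n)).measurable).const_mul _
  have horbit : ∀ x, {t : ℝ | U t x ∈ G} = {t : ℝ | ∃ N : ℕ, P₀ ≤ N ∧ N ≤ P ∧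
      1 - ε ≤ (1 / (N : ℝ)) *
        ∑ n ∈ Finset.Icc 1 N,
          Set.indicator {w : ℝ | U w x ∈ E} (fun _ => (1 : ℝ)) (s n + t)} := by
    intro x
    ext t
    have hflow : ∀ n, U (s n) (U t x) = U (s n + t) x := fun n => by rw [hUadd]; rfl
    simp only [G, mem_ofPred_eq, hflow]
    rfl
  calc μ G ≤ ∫⁻ x, eUpperDensity {t : ℝ | U t x ∈ G} ∂μ :=
        measure_le_lintegral_eUpperDensity hUmp hUmeas hG
    _ ≤ ∫⁻ x, ENNReal.ofReal C * eUpperDensity {t : ℝ | U t x ∈ E} ∂μ :=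
      lintegral_mono fun x => by
        rw [horbit x]
        exact eUpperDensity_le_of_upperDensity_le
          (h P _ (measurableSet_setOf_flow_mem hUmeas hE x))
    _ = ENNReal.ofReal C * ∫⁻ x, eUpperDensity {t : ℝ | U t x ∈ E} ∂μ :=
        lintegral_const_mul _ (measurable_eUpperDensity_setOf_flow_mem hUmeas hE)
    _ ≤ ENNReal.ofReal C * μ E := by
        gcongr
        exact lintegral_eUpperDensity_le_measure hUmp hUadd hUmeas hE

theorem stmt14 (s : ℕ → ℝ) (hs : ∀ n, 0 < s n)
    (ε : ℝ) (hε : ε ∈ Set.Ioo (0 : ℝ) 1) (P₀ : ℕ) (hP₀ : 0 < P₀) (C : ℝ)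
    (h : ∀ P : ℕ, ∀ E : Set ℝ, MeasurableSet E →
      upperDensity {t : ℝ | ∃ N : ℕ, P₀ ≤ N ∧ N ≤ P ∧
          1 - ε ≤ (1 / (N : ℝ)) *
            ∑ n ∈ Finset.Icc 1 N, Set.indicator E (fun _ => (1 : ℝ)) (s n + t)}
        ≤ C * upperDensity E)
    (X : Type*) [MeasurableSpace X] (μ : Measure X) [IsProbabilityMeasure μ]
    (U : ℝ → X → X) (hUmp : ∀ t, MeasurePreserving (U t) μ μ)
    (hU0 : U 0 = id) (hUadd : ∀ t u, U (t + u) = U t ∘ U u)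
    (hUmeas : Measurable fun p : ℝ × X => U p.1 p.2)
    (E : Set X) (hE : MeasurableSet E) (P : ℕ) :
    μ {x : X | ∃ N : ℕ, P₀ ≤ N ∧ N ≤ P ∧
        1 - ε ≤ (1 / (N : ℝ)) *
          ∑ n ∈ Finset.Icc 1 N, Set.indicator E (fun _ => (1 : ℝ)) (U (s n) x)}
      ≤ ENNReal.ofReal C * μ E :=
  stmt14_general s ε P₀ C h X μ U hUmp hUadd hUmeas E hE P
end

section
/- Let b₁, …, b_l ≥ 2 be pairwise coprime and let a_i be coprime to b_i with α_i = a_i/b_i non-integer. If n₁^{α₁}n₂^{α₂}⋯n_l^{α_l} is rational with all n_i positive integers, and n_i is b_i-free for each i, then n_i = 1 for all i. -/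
open Finset Function

namespace IsBFree

variable {b n : ℕ}

theorem ne_zero (h : IsBFree b n) : n ≠ 0 := by
  rintro rfl
  exact h 2 one_lt_two (dvd_zero _)

theorem exponent_ne_zero (h : IsBFree b n) : b ≠ 0 := by
  rintro rfl
  exact h 2 one_lt_two (by simp)

theorem factorization_lt (h : IsBFree b n) {p : ℕ} (hp : p.Prime) : n.factorization p < b := by
  by_contra! hle
  exact h p hp.one_lt ((pow_dvd_pow p hle).trans (Nat.ordProj_dvd n p))

theorem eq_one_of_dvd_factorization (h : IsBFree b n)
    (hdvd : ∀ p, p.Prime → b ∣ n.factorization p) : n = 1 := by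
  have hfac : n.factorization = 0 := by
    ext p
    by_cases hp : p.Prime
    · exact Nat.eq_zero_of_dvd_of_lt (hdvd p hp) (h.factorization_lt hp)
    · exact Nat.factorization_eq_zero_of_not_prime n hp
  exact ((Nat.factorization_eq_zero_iff' n).mp hfac).resolve_left h.ne_zero

end IsBFree

theorem Rat.exists_nat_pow_eq_of_pow_eq_natCast {q : ℚ} {B N : ℕ} (hB : B ≠ 0)
    (h : q ^ B = N) : ∃ m : ℕ, m ^ B = N := by
  have hden : q.den = 1 := by
    have := congrArg Rat.den h
    rw [Rat.den_pow, Rat.den_natCast] at this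
    exact (pow_eq_one_iff.mp this).resolve_right hB
  have hnum : q.num ^ B = N := by
    rw [← Rat.coe_int_num_of_den_eq_one hden] at h
    exact_mod_cast h
  exact ⟨q.num.natAbs, by rw [← Int.natAbs_pow, hnum, Int.natAbs_natCast]⟩

theorem Real.rpow_div_natCast_pow_mul {x : ℝ} (hx : 0 ≤ x) (a : ℕ) {b : ℕ} (hb : b ≠ 0) (c : ℕ) :
    (x ^ ((a : ℝ) / b)) ^ (b * c) = x ^ (a * c) := by
  rw [← Real.rpow_natCast, ← Real.rpow_mul hx, ← Real.rpow_natCast x]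
  congr 1
  push_cast
  field_simp

section

variable {ι : Type*} [Fintype ι] [DecidableEq ι] {a b n : ι → ℕ}

theorem dvd_factorization_of_pow_prod_eq_prod_pow
    (hcop : ∀ i, (a i).Coprime (b i)) (hbb : Pairwise (Nat.Coprime on b))
    (hn : ∀ i, n i ≠ 0) {m : ℕ}
    (h : m ^ ∏ i, b i = ∏ i, n i ^ (a i * ∏ k ∈ univ.erase i, b k)) (j : ι) (p : ℕ) :
    b j ∣ (n j).factorization p := by
  set P : ι → ℕ := fun i => ∏ k ∈ univ.erase i, b k
  have hval : (∏ i, b i) * m.factorization p = ∑ i, a i * P i * (n i).factorization p := by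
    have := congrArg (fun x => x.factorization p) h
    simpa [Nat.factorization_prod fun i _ => pow_ne_zero _ (hn i), hn] using this
  have hdvd_sum : b j ∣ ∑ i, a i * P i * (n i).factorization p :=
    hval ▸ (dvd_prod_of_mem b (mem_univ j)).mul_right _
  have hdvd_rest : b j ∣ ∑ i ∈ univ.erase j, a i * P i * (n i).factorization p :=
    dvd_sum fun i hi => ((dvd_prod_of_mem b (mem_erase.mpr
      ⟨(ne_of_mem_erase hi).symm, mem_univ j⟩)).mul_left _).mul_right _
  rw [← add_sum_erase _ _ (mem_univ j)] at hdvd_sum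
  have hcop_j : (b j).Coprime (a j * P j) :=
    (hcop j).symm.mul_right (Nat.Coprime.prod_right fun k hk => hbb (ne_of_mem_erase hk).symm)
  exact hcop_j.dvd_of_dvd_mul_left ((Nat.dvd_add_left hdvd_rest).mp hdvd_sum)

end

theorem stmt17_general (l : ℕ) (a b : Fin l → ℕ)
    (hcop : ∀ i, Nat.Coprime (a i) (b i))
    (hbb : ∀ i j, i ≠ j → Nat.Coprime (b i) (b j))
    (n : Fin l → ℕ) (hnf : ∀ i, IsBFree (b i) (n i))
    (hrat : ∃ q : ℚ, ∏ i, (n i : ℝ) ^ ((a i : ℝ) / (b i : ℝ)) = (q : ℝ)) :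
    ∀ i, n i = 1 := by
  obtain ⟨q, hq⟩ := hrat
  have hb i : b i ≠ 0 := (hnf i).exponent_ne_zero
  have hpow : q ^ ∏ i, b i = ((∏ i, n i ^ (a i * ∏ k ∈ univ.erase i, b k) : ℕ) : ℚ) := by
    suffices (q : ℝ) ^ ∏ i, b i = ((∏ i, n i ^ (a i * ∏ k ∈ univ.erase i, b k) : ℕ) : ℝ) by
      exact_mod_cast this
    rw [← hq, ← prod_pow]
    push_cast
    refine prod_congr rfl fun i _ => ?_
    rw [← mul_prod_erase univ b (mem_univ i)]
    exact Real.rpow_div_natCast_pow_mul (Nat.cast_nonneg _) _ (hb i) _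
  obtain ⟨m, hm⟩ :=
    Rat.exists_nat_pow_eq_of_pow_eq_natCast (prod_ne_zero_iff.mpr fun i _ => hb i) hpow
  intro j
  exact (hnf j).eq_one_of_dvd_factorization fun p _ =>
    dvd_factorization_of_pow_prod_eq_prod_pow hcop hbb (fun i => (hnf i).ne_zero) hm j p

theorem stmt17 (l : ℕ) (a b : Fin l → ℕ) (ha : ∀ i, 0 < a i) (hb : ∀ i, 2 ≤ b i)
    (hcop : ∀ i, Nat.Coprime (a i) (b i))
    (hbb : ∀ i j, i ≠ j → Nat.Coprime (b i) (b j))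
    (n : Fin l → ℕ) (hn : ∀ i, 0 < n i) (hnf : ∀ i, IsBFree (b i) (n i))
    (hrat : ∃ q : ℚ, ∏ i, (n i : ℝ) ^ ((a i : ℝ) / (b i : ℝ)) = (q : ℝ)) :
    ∀ i, n i = 1 :=
  stmt17_general l a b hcop hbb n hnf hrat
end

section
/- Let p₁, …, p_r be distinct primes and m ≥ 2. If P is a polynomial over ℚ in r variables whose degree in each variable is strictly less than m, and P(p₁^{1/m}, …, p_r^{1/m}) = 0, then all coefficients of P vanish; equivalently, the real numbers p₁^{c₁/m}⋯p_r^{c_r/m} for 0 ≤ c_i < m are linearly independent over ℚ. -/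
/-!
If `z` is real and `z ^ M ∈ K`, every complex conjugate `w` of `z` over `K` satisfies
`w ^ M = z ^ M`, hence `|w| = |z|`. The constant coefficient of the minimal polynomial `f` of `z`
is `±` the product of the conjugates, so `z ^ deg f = ±f(0) ∈ K` and `f = X ^ deg f - a`.
When `z ∉ K` we get `deg f ≥ 2`, so the trace of `z` vanishes in every finite extension of `K`.

Now let `∑ gᵢ vᵢ = 0` with `vᵢ ^ M ∈ K` and no quotient `vᵢ / vⱼ` (`i ≠ j`) in `K`. Dividing by
`v_{i₀}` and taking the trace into `K` leaves `g_{i₀} [L : K] = 0`. For the monomials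
`∏ pᵢ ^ (cᵢ / m)`, the `m`-th power of a quotient is `∏ pᵢ ^ (cᵢ - c'ᵢ)`, and comparing
`pᵢ`-adic valuations shows that it is the `m`-th power of a rational only if `c = c'`.
-/

open Polynomial

theorem IsIntegral.of_pow_mem_range {R A : Type*} [CommRing R] [CommRing A] [Algebra R A]
    {x : A} {M : ℕ} (hM : M ≠ 0) (hx : x ^ M ∈ (algebraMap R A).range) : IsIntegral R x :=
  have ⟨_, hb⟩ := hx
  .of_pow (Nat.pos_of_ne_zero hM) (hb ▸ isIntegral_algebraMap)

section RealRadicals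

variable {K : Type*} [Field K] [Algebra K ℝ]

theorem Real.exists_pow_natDegree_minpoly_eq_algebraMap {z : ℝ} {M : ℕ} (hM : M ≠ 0)
    (hz : z ^ M ∈ (algebraMap K ℝ).range) :
    ∃ a : K, z ^ (minpoly K z).natDegree = algebraMap K ℝ a := by
  have hint : IsIntegral K z := .of_pow_mem_range hM hz
  obtain ⟨b, hb⟩ := hz
  set f := minpoly K z
  set φ : K →+* ℂ := (algebraMap ℝ ℂ).comp (algebraMap K ℝ)
  have hF : (f.map φ).Monic := (minpoly.monic hint).map φ
  have hsplit : (f.map φ).Splits := IsAlgClosed.splits _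
  have hroot : ∀ w ∈ (f.map φ).roots, ‖w‖ = |z| := by
    intro w hw
    have hdvd : f.map φ ∣ (X ^ M - C b).map φ :=
      Polynomial.map_dvd φ (minpoly.dvd K z (by simp [hb]))
    have hwM : w ^ M = (z : ℂ) ^ M := by
      have := eval_eq_zero_of_dvd_of_eval_eq_zero hdvd ((mem_roots hF.ne_zero).mp hw)
      simpa [φ, hb, sub_eq_zero] using this
    have := congrArg (‖·‖) hwM
    simp only [norm_pow, Complex.norm_real, Real.norm_eq_abs] at this
    exact (pow_left_inj₀ (norm_nonneg w) (abs_nonneg z) hM).mp this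
  have hprod : ‖(f.map φ).roots.prod‖ = |z| ^ f.natDegree := by
    have := map_multiset_prod (normHom : ℂ →*₀ ℝ) (f.map φ).roots
    rw [Multiset.map_congr rfl (fun w hw => (normHom_apply w).trans (hroot w hw)),
      Multiset.map_const', Multiset.prod_replicate, ← hsplit.natDegree_eq_card_roots,
      natDegree_map] at this
    exact this
  have hnorm : |z| ^ f.natDegree = |algebraMap K ℝ (f.coeff 0)| := by
    have h0 := congrArg (‖·‖) (hsplit.coeff_zero_eq_prod_roots_of_monic hF)
    rw [coeff_map, norm_mul, norm_pow, norm_neg, norm_one, one_pow, one_mul, hprod] at h0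
    simpa [φ] using h0.symm
  rcases abs_eq_abs.mp ((pow_abs z _).symm.trans hnorm) with h | h
  · exact ⟨f.coeff 0, h⟩
  · exact ⟨-f.coeff 0, by rw [h, map_neg]⟩

theorem Real.minpoly_eq_X_pow_sub_C_of_pow_mem {z : ℝ} {M : ℕ} (hM : M ≠ 0)
    (hz : z ^ M ∈ (algebraMap K ℝ).range) :
    ∃ a : K, minpoly K z = X ^ (minpoly K z).natDegree - C a := by
  obtain ⟨a, ha⟩ := Real.exists_pow_natDegree_minpoly_eq_algebraMap hM hz
  have hint : IsIntegral K z := .of_pow_mem_range hM hz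
  have hd : (minpoly K z).natDegree ≠ 0 := (minpoly.natDegree_pos hint).ne'
  exact ⟨a, (eq_of_monic_of_dvd_of_natDegree_le (minpoly.monic hint) (monic_X_pow_sub_C a hd)
    (minpoly.dvd K z (by simp [ha])) natDegree_X_pow_sub_C.le).symm⟩

theorem Real.trace_eq_zero_of_pow_mem {L : Type*} [Field L] [Algebra K L] [Algebra L ℝ]
    [IsScalarTower K L ℝ] [FiniteDimensional K L] {z : L} {M : ℕ} (hM : M ≠ 0)
    (hz : algebraMap L ℝ z ^ M ∈ (algebraMap K ℝ).range)
    (hzK : algebraMap L ℝ z ∉ (algebraMap K ℝ).range) :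
    Algebra.trace K L z = 0 := by
  have hint : IsIntegral K (algebraMap L ℝ z) := (IsIntegral.of_finite K z).algebraMap
  obtain ⟨a, ha⟩ := Real.minpoly_eq_X_pow_sub_C_of_pow_mem hM hz
  have hd := (minpoly.two_le_natDegree_iff hint).mpr hzK
  set d := (minpoly K (algebraMap L ℝ z)).natDegree
  rw [trace_eq_finrank_mul_minpoly_nextCoeff, ← minpoly.algebraMap_eq (algebraMap L ℝ).injective,
    ha, nextCoeff_of_natDegree_pos (by rw [natDegree_X_pow_sub_C]; omega), natDegree_X_pow_sub_C,
    coeff_sub, coeff_X_pow, coeff_C, if_neg (by omega), if_neg (by omega), sub_zero, neg_zero,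
    mul_zero]

theorem Real.linearIndependent_of_pow_mem {ι : Type*} [Finite ι] {v : ι → ℝ} {M : ℕ}
    (hM : M ≠ 0) (hv : ∀ i, v i ≠ 0) (hpow : ∀ i, v i ^ M ∈ (algebraMap K ℝ).range)
    (hratio : Pairwise fun i j => v i / v j ∉ (algebraMap K ℝ).range) :
    LinearIndependent K v := by
  have := Fintype.ofFinite ι
  have : CharZero K := (algebraMap K ℝ).charZero
  rw [Fintype.linearIndependent_iff]
  intro g hg i₀
  set z : ι → ℝ := fun i => v i / v i₀
  have hzpow (i : ι) : z i ^ M ∈ (algebraMap K ℝ).range := by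
    obtain ⟨a, ha⟩ := hpow i
    obtain ⟨b, hb⟩ := hpow i₀
    exact ⟨a / b, by rw [map_div₀, ha, hb, div_pow]⟩
  set L := IntermediateField.adjoin K (Set.range z)
  have : FiniteDimensional K L := IntermediateField.finiteDimensional_adjoin <| by
    rintro _ ⟨i, rfl⟩
    exact .of_pow_mem_range hM (hzpow i)
  let w (i : ι) : L := ⟨z i, IntermediateField.subset_adjoin _ _ ⟨i, rfl⟩⟩
  have hw : ∑ i, g i • w i = 0 := by
    apply Subtype.val_injective
    simp only [IntermediateField.coe_sum, IntermediateField.coe_smul, w, z, ← smul_div_assoc,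
      ← Finset.sum_div, hg, zero_div, ZeroMemClass.coe_zero]
  have htrace := congrArg (Algebra.trace K L) hw
  rw [map_sum, map_zero, Finset.sum_eq_single i₀ (fun i _ hi => by
    rw [map_smul, Real.trace_eq_zero_of_pow_mem hM (hzpow i) (hratio hi), smul_zero])
    (by simp)] at htrace
  have hw₀ : w i₀ = 1 := Subtype.ext (div_self (hv i₀))
  rw [hw₀, map_smul, ← map_one (algebraMap K L), Algebra.trace_algebraMap, nsmul_one,
    smul_eq_zero] at htrace
  exact htrace.resolve_right (Nat.cast_ne_zero.mpr Module.finrank_pos.ne')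

end RealRadicals

theorem Nat.factorization_prod_pow_apply {ι : Type*} [Fintype ι] {p : ι → ℕ}
    (hp : ∀ i, (p i).Prime) (hinj : Function.Injective p) (e : ι → ℕ) (i : ι) :
    (∏ j, p j ^ e j).factorization (p i) = e i := by
  rw [Nat.factorization_prod fun j _ => pow_ne_zero _ (hp j).ne_zero, Finsupp.finsetSum_apply]
  simp only [(hp _).factorization_pow, Finsupp.single_apply]
  rw [Finset.sum_eq_single i (fun j _ hj => if_neg (hinj.ne hj)) (by simp), if_pos rfl]

theorem eq_of_pow_eq_prod_pow_div_prod_pow {ι : Type*} [Fintype ι] {p : ι → ℕ}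
    (hp : ∀ i, (p i).Prime) (hinj : Function.Injective p) {m : ℕ} {e e' : ι → ℕ}
    (he : ∀ i, e i < m) (he' : ∀ i, e' i < m) {t : ℚ}
    (ht : t ^ m = ((∏ i, p i ^ e i : ℕ) : ℚ) / (∏ i, p i ^ e' i : ℕ)) : e = e' := by
  funext i
  have : Fact (p i).Prime := ⟨hp i⟩
  have hN (e : ι → ℕ) : ((∏ i, p i ^ e i : ℕ) : ℚ) ≠ 0 :=
    Nat.cast_ne_zero.mpr (Finset.prod_ne_zero_iff.mpr fun j _ => pow_ne_zero _ (hp j).ne_zero)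
  have hv := congrArg (padicValRat (p i)) ht
  rw [padicValRat.pow, padicValRat.div (hN e) (hN e'), padicValRat.of_nat, padicValRat.of_nat,
    ← Nat.factorization_def _ (hp i), ← Nat.factorization_def _ (hp i),
    Nat.factorization_prod_pow_apply hp hinj, Nat.factorization_prod_pow_apply hp hinj] at hv
  have := Int.eq_zero_of_abs_lt_dvd ⟨_, hv.symm⟩ (by rw [abs_lt]; have := he i; have := he' i; omega)
  omega

theorem Real.prod_rpow_div_pow {ι : Type*} [Fintype ι] {a : ι → ℝ} (ha : ∀ i, 0 ≤ a i)
    {m : ℕ} (hm : m ≠ 0) (e : ι → ℕ) :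
    (∏ i, a i ^ ((e i : ℝ) / m)) ^ m = ∏ i, a i ^ e i := by
  rw [← Finset.prod_pow]
  refine Finset.prod_congr rfl fun i _ => ?_
  rw [← Real.rpow_natCast _ m, ← Real.rpow_mul (ha i), div_mul_cancel₀ _ (Nat.cast_ne_zero.mpr hm),
    Real.rpow_natCast]

theorem prod_prime_rpow_div_notMem_range {ι : Type*} [Fintype ι] {p : ι → ℕ}
    (hp : ∀ i, (p i).Prime) (hinj : Function.Injective p) {m : ℕ} {c c' : ι → Fin m}
    (hcc' : c ≠ c') :
    (∏ i, (p i : ℝ) ^ (((c i : ℕ) : ℝ) / m)) / (∏ i, (p i : ℝ) ^ (((c' i : ℕ) : ℝ) / m)) ∉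
      (algebraMap ℚ ℝ).range := by
  rintro ⟨t, ht⟩
  have hm : m ≠ 0 := (Fin.pos (c (Function.ne_iff.mp hcc').choose)).ne'
  refine hcc' (funext fun i => Fin.ext (congrFun (eq_of_pow_eq_prod_pow_div_prod_pow hp hinj
    (fun i => (c i).isLt) (fun i => (c' i).isLt) (t := t) ?_) i))
  apply Rat.cast_injective (α := ℝ)
  push_cast
  simpa only [eq_ratCast, div_pow, Real.prod_rpow_div_pow (fun i => Nat.cast_nonneg (p i)) hm]
    using congrArg (· ^ m) ht

theorem MvPolynomial.eq_zero_of_aeval_eq_zero_of_linearIndependent {σ R A : Type*} [Fintype σ]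
    [CommRing R] [CommRing A] [Algebra R A] {m : ℕ} {x : σ → A}
    (hx : LinearIndependent R fun c : σ → Fin m => ∏ i, x i ^ (c i : ℕ))
    {P : MvPolynomial σ R} (hP : ∀ i, P.degreeOf i < m) (h : aeval x P = 0) : P = 0 := by
  let exps (d : P.support) (i : σ) : Fin m :=
    ⟨d.1 i, (monomial_le_degreeOf i d.2).trans_lt (hP i)⟩
  have hexps : Function.Injective exps := fun d d' hdd' =>
    Subtype.ext (Finsupp.ext fun i => congrArg Fin.val (congrFun hdd' i))
  have hcoeff := Fintype.linearIndependent_iff.mp (hx.comp exps hexps) (fun d => P.coeff d.1) <| by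
    rw [← h, aeval_def, eval₂_eq', ← Finset.sum_coe_sort P.support]
    simp only [Function.comp_apply, exps, Algebra.smul_def]
  exact support_eq_empty.mp (Finset.eq_empty_of_forall_notMem fun d hd =>
    mem_support_iff.mp hd (hcoeff ⟨d, hd⟩))

theorem stmt18 (r m : ℕ) (hm : 2 ≤ m) (p : Fin r → ℕ) (hp : ∀ i, (p i).Prime)
    (hinj : Function.Injective p) :
    (∀ P : MvPolynomial (Fin r) ℚ, (∀ i, P.degreeOf i < m) →
        (MvPolynomial.aeval fun i => ((p i : ℝ)) ^ ((1 : ℝ) / m)) P = 0 → P = 0) ∧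
    LinearIndependent ℚ
      (fun c : Fin r → Fin m => ∏ i, (p i : ℝ) ^ (((c i : ℕ) : ℝ) / m)) := by
  have hm0 : m ≠ 0 := by omega
  have hp0 (i : Fin r) : (0 : ℝ) ≤ p i := Nat.cast_nonneg _
  have hLI : LinearIndependent ℚ
      (fun c : Fin r → Fin m => ∏ i, (p i : ℝ) ^ (((c i : ℕ) : ℝ) / m)) := by
    refine Real.linearIndependent_of_pow_mem hm0 (fun c => ?_)
      (fun c => ⟨∏ i, p i ^ (c i : ℕ), ?_⟩) (fun c c' => prod_prime_rpow_div_notMem_range hp hinj)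
    · exact Finset.prod_ne_zero_iff.mpr fun i _ =>
        (Real.rpow_pos_of_pos (Nat.cast_pos.mpr (hp i).pos) _).ne'
    · rw [Real.prod_rpow_div_pow hp0 hm0]
      simp
  have hmonomial : (fun c : Fin r → Fin m => ∏ i, ((p i : ℝ) ^ ((1 : ℝ) / m)) ^ (c i : ℕ)) =
      fun c => ∏ i, (p i : ℝ) ^ (((c i : ℕ) : ℝ) / m) :=
    funext fun c => Finset.prod_congr rfl fun i _ => by
      rw [← Real.rpow_natCast, ← Real.rpow_mul (hp0 i), one_div_mul_eq_div]
  exact ⟨fun P hP hPx => MvPolynomial.eq_zero_of_aeval_eq_zero_of_linearIndependent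
    (hmonomial ▸ hLI) hP hPx, hLI⟩
end
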